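/- arXiv:2310.00855 — 7 statements merged into one kernel-verified Lean document; each statement's English description precedes it below -/
import Mathlib

section
/- Let ρ = (n−1, n−2, …, 1, 0). Then a_ρ = ∏_{1 ≤ i < j ≤ n} (x_i − x_j), i.e. the polynomial Σ_{σ ∈ S_n} sgn(σ) ∏_{i=1}^n (x_{σ(i)}|t)^{n−i} equals the Vandermonde product ∏_{1 ≤ i < j ≤ n} (x_i − x_j). -/
/- R = ℤ[t₁, t₂, …] with tₖ encoded as `MvPolynomial.X (k-1)`, i.e. 0-indexed;
   P = R[x₁, …, xₙ] = MvPolynomial (Fin n) R. -/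

open MvPolynomial

noncomputable section

abbrev R : Type := MvPolynomial ℕ ℤ

abbrev P (n : ℕ) : Type := MvPolynomial (Fin n) R

/-- The double monomial `(x_i | t)^k = (x_i + t₁) ⋯ (x_i + tₖ)`. -/
def dm (n : ℕ) (i : Fin n) (k : ℕ) : P n :=
  ∏ j ∈ Finset.range k, (X i + C (MvPolynomial.X j : R))

/-- `a_ν = Σ_{σ ∈ S_n} sgn(σ) Π_i (x_{σ(i)} | t)^{ν_i}`. -/
def aPoly (n : ℕ) (ν : Fin n → ℕ) : P n :=
  ∑ σ : Equiv.Perm (Fin n), (Equiv.Perm.sign σ : ℤ) • ∏ i : Fin n, dm n (σ i) (ν i)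

/-- `ρ = (n-1, n-2, …, 1, 0)`. -/
def rho (n : ℕ) : Fin n → ℕ := fun i => n - 1 - (i : ℕ)

/-- auxiliary: monic polynomial of degree k whose eval at X i is dm n i k -/
def q (n k : ℕ) : Polynomial (P n) :=
  ∏ j ∈ Finset.range k, (Polynomial.X + Polynomial.C (C (MvPolynomial.X j : R)))

lemma q_monic (n k : ℕ) : (q n k).Monic :=
  Polynomial.monic_prod_of_monic _ _ fun _ _ => Polynomial.monic_X_add_C _

lemma q_natDegree (n k : ℕ) : (q n k).natDegree = k := by
  rw [q, Polynomial.natDegree_prod_of_monic _ _ fun _ _ => Polynomial.monic_X_add_C _]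
  simp

lemma q_eval (n : ℕ) (i : Fin n) (k : ℕ) : (q n k).eval (X i) = dm n i k := by
  simp [q, dm, Polynomial.eval_prod]

/-- `a_ρ` equals the Vandermonde product `Π_{i<j} (x_i - x_j)`. -/
theorem stmt_0 (n : ℕ) (hn : 1 ≤ n) :
    aPoly n (rho n) = ∏ i : Fin n, ∏ j ∈ Finset.Ioi i, (X i - X j : P n) := by
  classical
  set M : Matrix (Fin n) (Fin n) (P n) :=
    Matrix.of fun i j => (q n (j : ℕ)).eval (X (Fin.rev i)) with hM
  have h1 : aPoly n (rho n) = (M.submatrix Fin.revPerm Fin.revPerm).det := by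
    rw [Matrix.det_apply, aPoly]
    refine Finset.sum_congr rfl fun σ _ => ?_
    rw [Units.smul_def]
    congr 1
    refine Finset.prod_congr rfl fun i _ => ?_
    have hv : rho n i = ((Fin.rev i : Fin n) : ℕ) := by
      have := i.isLt
      simp only [rho, Fin.val_rev]
      omega
    simp [hM, q_eval, hv]
  have h2 : (M.submatrix Fin.revPerm Fin.revPerm).det = M.det :=
    Matrix.det_submatrix_equiv_self _ _
  have h3 : M.det = (Matrix.vandermonde fun i => (X (Fin.rev i) : P n)).det :=
    (Matrix.det_eval_matrixOfPolynomials_eq_det_vandermonde _ (fun j => q n (j : ℕ))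
      (fun j => q_natDegree n j) (fun j => q_monic n j)).symm
  rw [h1, h2, h3, Matrix.det_vandermonde]
  -- now: ∏ i, ∏ j ∈ Ioi i, (X (rev j) - X (rev i)) = ∏ i, ∏ j ∈ Ioi i, (X i - X j)
  have key : ∀ (f : Fin n → Fin n → P n),
      (∏ i : Fin n, ∏ j ∈ Finset.Ioi i, f i j) = ∏ i : Fin n, ∏ j ∈ Finset.Iio i, f j i :=
    fun f => Finset.prod_comm' (by simp)
  rw [key (fun i j => (X (Fin.rev j) - X (Fin.rev i) : P n))]
  refine Fintype.prod_equiv Fin.revPerm _ _ fun i => ?_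
  simp only [Fin.revPerm_apply, Fin.rev_rev]
  refine Finset.prod_nbij' (fun j => Fin.rev j) (fun j => Fin.rev j) ?_ ?_ ?_ ?_ ?_
  · intro j hj
    simp only [Finset.mem_Iio, Finset.mem_Ioi, Fin.lt_iff_val_lt_val, Fin.val_rev] at hj ⊢
    omega
  · intro j hj
    simp only [Finset.mem_Iio, Finset.mem_Ioi, Fin.lt_iff_val_lt_val, Fin.val_rev] at hj ⊢
    omega
  · simp
  · simp
  · intro j hj
    simp


end
end

section
/- The family (a_ν), indexed by strictly decreasing tuples ν_1 > ν_2 > … > ν_n ≥ 0 of nonnegative integers, is an R-basis of the R-module of skew-symmetric polynomials in P = R[x_1, …, x_n] (i.e. it is R-linearly independent and spans that module). -/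
/- R = ℤ[t₁, t₂, …] with tₖ encoded as `MvPolynomial.X (k-1)`, i.e. 0-indexed;
   P = R[x₁, …, xₙ] = MvPolynomial (Fin n) R. -/

open MvPolynomial

noncomputable section

/-- A polynomial `f ∈ P` is skew-symmetric if `σ · f = sgn(σ) f` for every
permutation `σ` of the variables. -/
def IsSkew (n : ℕ) (f : P n) : Prop :=
  ∀ σ : Equiv.Perm (Fin n), rename σ f = (Equiv.Perm.sign σ : ℤ) • f

/-- `Λₙ^sgn`, the `R`-submodule of skew-symmetric polynomials of `P`. -/
def SkewSub (n : ℕ) : Submodule R (P n) where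
  carrier := {f | IsSkew n f}
  add_mem' := by
    intro f g hf hg σ
    rw [map_add, hf σ, hg σ, smul_add]
  zero_mem' := by
    intro σ
    simp
  smul_mem' := by
    intro c f hf σ
    rw [map_smul, hf σ, smul_comm]

/-!
Modulo polynomials of lower total degree, `(x | t)^k ≡ x^k`, so `a_ν` agrees with the
alternant `Σ_σ sgn(σ) x^{σν}` in all degrees `≥ |ν|`; hence for strictly decreasing `μ` with
`|μ| ≥ |ν|` the coefficient of `x^μ` in `a_ν` is `δ_{μν}`. A skew-symmetric polynomial has no
monomials with a repeated exponent and its coefficients are permuted up to sign, so in each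
degree it is determined by its coefficients at strictly decreasing exponents. This
unitriangularity gives linear independence (compare coefficients at an index of maximal
degree) and spanning (subtracting `Σ_μ c_μ a_μ` lowers the degree).
-/

lemma Equiv.Perm.eq_one_of_strictAnti_comp {n : ℕ} {α : Type*} [PartialOrder α] {ν : Fin n → α}
    (hν : StrictAnti ν) {σ : Equiv.Perm (Fin n)} (hνσ : StrictAnti (ν ∘ σ)) : σ = 1 :=
  Equiv.ext fun i => hν.injective <| congrFun
    (Tuple.unique_antitone (τ := 1) hνσ.antitone hν.antitone) i

lemma Finsupp.exists_perm_strictAnti_mapDomain {n : ℕ} {M : Type*} [AddCommMonoid M]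
    [LinearOrder M] {d : Fin n →₀ M} (hd : Function.Injective d) :
    ∃ σ : Equiv.Perm (Fin n), StrictAnti (d.mapDomain σ) := by
  set τ := Tuple.sort (OrderDual.toDual ∘ d)
  refine ⟨τ.symm, ?_⟩
  have : Antitone (d ∘ τ) := Tuple.monotone_sort (OrderDual.toDual ∘ d)
  convert this.strictAnti_of_injective (hd.comp τ.injective) using 1
  ext j
  simp [Finsupp.mapDomain_equiv_apply]

namespace MvPolynomial

variable {ι S : Type*}

section CommSemiring

variable [CommSemiring S]

variable (ι S) in
def degreeLT (D : ℕ) : Submodule S (MvPolynomial ι S) :=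
  restrictSupport S {d | d.degree < D}

lemma coeff_eq_zero_of_mem_degreeLT {D : ℕ} {p : MvPolynomial ι S} (hp : p ∈ degreeLT ι S D)
    {d : ι →₀ ℕ} (hd : D ≤ d.degree) : coeff d p = 0 :=
  notMem_support_iff.mp fun hmem => (hd.trans_lt (hp hmem)).false

lemma degreeLT_le_restrictTotalDegree (D : ℕ) :
    degreeLT ι S D ≤ restrictTotalDegree ι S D :=
  restrictSupport_mono _ fun d (hd : d.degree < D) => (hd.le : d.degree ≤ D)

lemma restrictTotalDegree_le_degreeLT_succ (D : ℕ) :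
    restrictTotalDegree ι S D ≤ degreeLT ι S (D + 1) :=
  restrictSupport_mono _ fun d (hd : d.degree ≤ D) => (Nat.lt_succ_of_le hd : d.degree < D + 1)

open scoped Pointwise in
lemma mul_mem_degreeLT {D E : ℕ} {p q : MvPolynomial ι S} (hp : p ∈ degreeLT ι S D)
    (hq : q ∈ restrictTotalDegree ι S E) : p * q ∈ degreeLT ι S (D + E) := by
  have hpq : p * q ∈ restrictSupport S ({d | d.degree < D} + {d | d.sum (fun _ e => e) ≤ E}) := by
    rw [restrictSupport_add]
    exact Submodule.mul_mem_mul hp hq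
  refine restrictSupport_mono _ ?_ hpq
  rintro _ ⟨a, (ha : a.degree < D), b, (hb : b.degree ≤ E), rfl⟩
  exact (map_add Finsupp.degree a b).trans_lt (Nat.add_lt_add_of_lt_of_le ha hb)

lemma X_pow_mem_restrictTotalDegree (i : ι) (k : ℕ) :
    (X i ^ k : MvPolynomial ι S) ∈ restrictTotalDegree ι S k := by
  rw [X_pow_eq_monomial, restrictTotalDegree, monomial_mem_restrictSupport]
  left
  simp

end CommSemiring

variable [CommRing S]

lemma prod_sub_prod_mem_degreeLT {κ : Type*} (s : Finset κ) (f g : κ → MvPolynomial ι S)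
    (D : κ → ℕ) (hg : ∀ k ∈ s, g k ∈ restrictTotalDegree ι S (D k))
    (hfg : ∀ k ∈ s, f k - g k ∈ degreeLT ι S (D k)) :
    ∏ k ∈ s, f k - ∏ k ∈ s, g k ∈ degreeLT ι S (∑ k ∈ s, D k) := by
  classical
  induction s using Finset.induction_on with
  | empty => simp
  | insert a s ha ih =>
    have hfa : f a ∈ restrictTotalDegree ι S (D a) := by
      simpa using Submodule.add_mem _
        (degreeLT_le_restrictTotalDegree _ (hfg a (s.mem_insert_self a)))
        (hg a (s.mem_insert_self a))
    have hG : ∏ k ∈ s, g k ∈ restrictTotalDegree ι S (∑ k ∈ s, D k) := by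
      rw [mem_restrictTotalDegree]
      refine (totalDegree_finsetProd s g).trans (Finset.sum_le_sum fun k hk => ?_)
      exact (mem_restrictTotalDegree ι _ (g k)).mp (hg k (s.mem_insert_of_mem hk))
    have hF := ih (fun k hk => hg k (s.mem_insert_of_mem hk))
      (fun k hk => hfg k (s.mem_insert_of_mem hk))
    rw [Finset.prod_insert ha, Finset.prod_insert ha, Finset.sum_insert ha,
      show f a * ∏ k ∈ s, f k - g a * ∏ k ∈ s, g k =
        (∏ k ∈ s, f k - ∏ k ∈ s, g k) * f a + (f a - g a) * ∏ k ∈ s, g k by ring]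
    exact Submodule.add_mem _ (add_comm (D a) _ ▸ mul_mem_degreeLT hF hfa)
      (mul_mem_degreeLT (hfg a (s.mem_insert_self a)) hG)

lemma prod_X_pow_comp_perm {n : ℕ} (σ : Equiv.Perm (Fin n)) (ν : Fin n → ℕ) :
    ∏ i, (X (σ i) : MvPolynomial (Fin n) S) ^ ν i =
      monomial (Finsupp.equivFunOnFinite.symm (ν ∘ σ.symm)) 1 := by
  rw [monomial_eq, C_1, one_mul, Finsupp.prod_fintype _ _ fun _ => pow_zero _]
  exact Fintype.prod_equiv σ _ _ fun i => by simp

variable (S) in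
def alternant {n : ℕ} (ν : Fin n → ℕ) : MvPolynomial (Fin n) S :=
  ∑ σ : Equiv.Perm (Fin n), (Equiv.Perm.sign σ : ℤ) • ∏ i, X (σ i) ^ ν i

variable (S) in
lemma coeff_alternant {n : ℕ} {ν : Fin n → ℕ} (hν : StrictAnti ν)
    {d : Fin n →₀ ℕ} (hd : StrictAnti d) :
    coeff d (alternant S ν) = if ν = d then 1 else 0 := by
  have hexp (e : Fin n → ℕ) : Finsupp.equivFunOnFinite.symm e = d ↔ e = d :=
    Finsupp.equivFunOnFinite.symm_apply_eq
  rw [alternant, coeff_sum, Finset.sum_eq_single 1]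
  · rw [coeff_smul, prod_X_pow_comp_perm, coeff_monomial]
    simp [hexp, ← Equiv.Perm.inv_def]
  · intro σ _ hσ
    have hνσ : ν ∘ σ.symm ≠ d := fun h =>
      hσ (inv_eq_one.mp (Equiv.Perm.eq_one_of_strictAnti_comp hν (h ▸ hd)))
    rw [coeff_smul, prod_X_pow_comp_perm, coeff_monomial, if_neg ((hexp _).not.mpr hνσ), smul_zero]
  · simp

end MvPolynomial

lemma dm_sub_X_pow_mem_degreeLT {n : ℕ} (i : Fin n) (k : ℕ) :
    dm n i k - X i ^ k ∈ degreeLT (Fin n) R k := by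
  have h := prod_sub_prod_mem_degreeLT (Finset.range k)
    (fun j => (X i + C (X j : R) : P n)) (fun _ => X i) (fun _ => 1)
    (fun _ _ => by simpa using X_pow_mem_restrictTotalDegree (S := R) i 1)
    (fun j _ => by
      rw [add_sub_cancel_left, degreeLT, C_apply, monomial_mem_restrictSupport]
      simp)
  simpa [dm] using h

lemma aPoly_sub_alternant_mem_degreeLT {n : ℕ} (ν : Fin n → ℕ) :
    aPoly n ν - alternant R ν ∈ degreeLT (Fin n) R (∑ i, ν i) := by
  rw [aPoly, alternant, ← Finset.sum_sub_distrib]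
  refine Submodule.sum_mem _ fun σ _ => ?_
  rw [← smul_sub]
  exact zsmul_mem (prod_sub_prod_mem_degreeLT _ _ _ _
    (fun i _ => X_pow_mem_restrictTotalDegree _ _)
    (fun i _ => dm_sub_X_pow_mem_degreeLT _ _)) _

lemma coeff_aPoly {n : ℕ} {ν : Fin n → ℕ} (hν : StrictAnti ν) {d : Fin n →₀ ℕ}
    (hd : StrictAnti d) (hdeg : ∑ i, ν i ≤ d.degree) :
    coeff d (aPoly n ν) = if ν = d then 1 else 0 := by
  rw [← sub_add_cancel (aPoly n ν) (alternant R ν), coeff_add,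
    coeff_eq_zero_of_mem_degreeLT (aPoly_sub_alternant_mem_degreeLT ν) hdeg, zero_add,
    coeff_alternant R hν hd]

lemma isSkew_aPoly {n : ℕ} (ν : Fin n → ℕ) : IsSkew n (aPoly n ν) := by
  intro τ
  have hdm (i : Fin n) (k : ℕ) : rename τ (dm n i k) = dm n (τ i) k := by
    simp [dm, map_prod]
  rw [aPoly, map_sum, Finset.smul_sum]
  refine Fintype.sum_equiv (Equiv.mulLeft τ) _ _ fun σ => ?_
  simp only [map_zsmul, map_prod, hdm, Equiv.coe_mulLeft, Equiv.Perm.mul_apply, smul_smul,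
    map_mul, Units.val_mul]
  rw [← mul_assoc, ← Units.val_mul, Int.units_mul_self, Units.val_one, one_mul]

namespace IsSkew

variable {n : ℕ} {f : P n}

lemma sign_smul_coeff_mapDomain (hf : IsSkew n f) (σ : Equiv.Perm (Fin n)) (d : Fin n →₀ ℕ) :
    (Equiv.Perm.sign σ : ℤ) • coeff (d.mapDomain σ) f = coeff d f := by
  rw [← coeff_smul, ← hf σ, coeff_rename_mapDomain _ σ.injective]

lemma coeff_eq_zero_of_not_injective (hf : IsSkew n f) {d : Fin n →₀ ℕ}
    (hd : ¬ Function.Injective d) : coeff d f = 0 := by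
  obtain ⟨i, j, hij, hne⟩ := Function.not_injective_iff.mp hd
  have hswap : d.mapDomain (Equiv.swap i j) = d := by
    ext k
    rw [Finsupp.mapDomain_equiv_apply, Equiv.symm_swap]
    rcases eq_or_ne k i with rfl | hki
    · simp [hij]
    rcases eq_or_ne k j with rfl | hkj
    · simp [hij]
    · rw [Equiv.swap_apply_of_ne_of_ne hki hkj]
  have := hf.sign_smul_coeff_mapDomain (Equiv.swap i j) d
  rw [hswap, Equiv.Perm.sign_swap hne, Units.val_neg, Units.val_one, neg_one_zsmul] at this
  -- `c = -c` forces `c = 0` because `R = ℤ[t]` has no `2`-torsion.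
  exact self_eq_neg.mp this.symm

lemma mem_degreeLT {D : ℕ} (hf : IsSkew n f)
    (h : ∀ d : Fin n →₀ ℕ, StrictAnti d → D ≤ d.degree → coeff d f = 0) :
    f ∈ degreeLT (Fin n) R D := by
  intro d hd
  by_contra hD
  have hinj : Function.Injective d := by
    by_contra hd'
    exact mem_support_iff.mp hd (hf.coeff_eq_zero_of_not_injective hd')
  obtain ⟨σ, hσ⟩ := Finsupp.exists_perm_strictAnti_mapDomain hinj
  have := hf.sign_smul_coeff_mapDomain σ d
  rw [h _ hσ (by rw [Finsupp.degree_mapDomain]; exact not_lt.mp hD), smul_zero] at this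
  exact mem_support_iff.mp hd this.symm

end IsSkew

lemma linearIndependent_aPoly (n : ℕ) :
    LinearIndependent R (fun ν : {ν : Fin n → ℕ // StrictAnti ν} => aPoly n ν.1) := by
  rw [linearIndependent_iff]
  intro l hl
  by_contra hl0
  obtain ⟨ν₀, hν₀, hmax⟩ := Finset.exists_max_image l.support (fun ν => ∑ i, ν.1 i)
    (Finsupp.support_nonempty_iff.mpr hl0)
  set d₀ := Finsupp.equivFunOnFinite.symm ν₀.1
  have hcoeff : ∀ ν ∈ l.support, coeff d₀ (l ν • aPoly n ν.1) = if ν = ν₀ then l ν else 0 := by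
    intro ν hν
    rw [coeff_smul, coeff_aPoly ν.2 ν₀.2 (by rw [Finsupp.degree_eq_sum]; exact hmax ν hν),
      smul_eq_mul, mul_ite, mul_one, mul_zero]
    exact if_congr (by simp [d₀, Subtype.ext_iff]) rfl rfl
  have := congrArg (coeff d₀) hl
  rw [Finsupp.linearCombination_apply, Finsupp.sum, coeff_sum, Finset.sum_congr rfl hcoeff,
    Finset.sum_ite_eq', if_pos hν₀, coeff_zero] at this
  exact Finsupp.mem_support_iff.mp hν₀ this

open Classical in
def antiSupport {n : ℕ} (f : P n) : Finset (Fin n →₀ ℕ) :=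
  f.support.filter fun d => StrictAnti d

lemma IsSkew.sub_sum_aPoly {n : ℕ} {f : P n} (hf : IsSkew n f) :
    IsSkew n (f - ∑ e ∈ antiSupport f, coeff e f • aPoly n e) :=
  (SkewSub n).sub_mem hf <| Submodule.sum_mem _ fun e _ => Submodule.smul_mem _ _ (isSkew_aPoly e)

lemma IsSkew.sub_sum_aPoly_mem_degreeLT {n D : ℕ} {f : P n} (hf : IsSkew n f)
    (hfD : f ∈ degreeLT (Fin n) R (D + 1)) :
    f - ∑ e ∈ antiSupport f, coeff e f • aPoly n e ∈ degreeLT (Fin n) R D := by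
  refine hf.sub_sum_aPoly.mem_degreeLT fun d hd hDd => ?_
  have hcoeff : ∀ e ∈ antiSupport f,
      coeff d (coeff e f • aPoly n e) = if e = d then coeff e f else 0 := by
    intro e he
    simp only [antiSupport, Finset.mem_filter] at he
    rw [coeff_smul, coeff_aPoly he.2 hd ?_, smul_eq_mul, mul_ite, mul_one, mul_zero]
    · simp [DFunLike.coe_fn_eq]
    · rw [← Finsupp.degree_eq_sum]
      exact Nat.le_trans (Nat.lt_succ_iff.mp (hfD he.1)) hDd
  rw [coeff_sub, coeff_sum, Finset.sum_congr rfl hcoeff, Finset.sum_ite_eq']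
  split_ifs with h
  · exact sub_self _
  · rw [sub_zero]
    by_contra hd0
    exact h (by simp [antiSupport, hd0, hd])

lemma mem_span_aPoly_of_mem_degreeLT {n : ℕ} (D : ℕ) {f : P n} (hf : IsSkew n f)
    (hfD : f ∈ degreeLT (Fin n) R D) :
    f ∈ Submodule.span R
      (Set.range (fun ν : {ν : Fin n → ℕ // StrictAnti ν} => aPoly n ν.1)) := by
  induction D generalizing f with
  | zero =>
    convert Submodule.zero_mem _
    exact MvPolynomial.ext _ _ fun d => coeff_eq_zero_of_mem_degreeLT hfD (Nat.zero_le _)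
  | succ D ih =>
    rw [← sub_add_cancel f (∑ e ∈ antiSupport f, coeff e f • aPoly n e)]
    refine Submodule.add_mem _ ?_ (Submodule.sum_mem _ fun e he => Submodule.smul_mem _ _ ?_)
    · exact ih hf.sub_sum_aPoly (hf.sub_sum_aPoly_mem_degreeLT hfD)
    · exact Submodule.subset_span ⟨⟨e, (Finset.mem_filter.mp he).2⟩, rfl⟩

theorem stmt_3_general (n : ℕ) :
    LinearIndependent R (fun ν : {ν : Fin n → ℕ // StrictAnti ν} => aPoly n ν.1) ∧
    Submodule.span R
        (Set.range (fun ν : {ν : Fin n → ℕ // StrictAnti ν} => aPoly n ν.1)) =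
      SkewSub n := by
  refine ⟨linearIndependent_aPoly n, le_antisymm ?_ fun f hf => ?_⟩
  · rw [Submodule.span_le]
    rintro _ ⟨ν, rfl⟩
    exact isSkew_aPoly ν.1
  · exact mem_span_aPoly_of_mem_degreeLT (f.totalDegree + 1) hf
      (restrictTotalDegree_le_degreeLT_succ _ ((mem_restrictTotalDegree _ _ f).mpr le_rfl))

/-- the family `a_ν`, for `ν` ranging over strictly decreasing tuples
of natural numbers, is an `R`-basis of the module of skew-symmetric polynomials:
it is linearly independent over `R` and spans the module of skew-symmetric
polynomials. -/
theorem stmt_3 (n : ℕ) (hn : 1 ≤ n) :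
    LinearIndependent R (fun ν : {ν : Fin n → ℕ // StrictAnti ν} => aPoly n ν.1) ∧
    Submodule.span R
        (Set.range (fun ν : {ν : Fin n → ℕ // StrictAnti ν} => aPoly n ν.1)) =
      SkewSub n :=
  stmt_3_general n

end
end

section
/- For every tuple ν = (ν_1, …, ν_n) ∈ ℕ^n, the following identity holds in P: (x_1 + x_2 + … + x_n) · a_ν = −(Σ_{i=1}^n t_{ν_i+1}) · a_ν + Σ_{j=1}^n a_{ν + e_j}, where ν + e_j denotes the tuple obtained from ν by increasing its j-th entry by 1. -/
/- R = ℤ[t₁, t₂, …] with tₖ encoded as `MvPolynomial.X (k-1)`, i.e. 0-indexed;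
   P = R[x₁, …, xₙ] = MvPolynomial (Fin n) R. -/

open MvPolynomial

noncomputable section

lemma key_per_sigma (n : ℕ) (ν : Fin n → ℕ) (σ : Equiv.Perm (Fin n)) :
    (∑ i : Fin n, (X i : P n)) * ∏ i : Fin n, dm n (σ i) (ν i) =
      - C (∑ i : Fin n, (MvPolynomial.X (ν i) : R)) * ∏ i : Fin n, dm n (σ i) (ν i)
      + ∑ j : Fin n, ∏ i : Fin n, dm n (σ i) (Function.update ν j (ν j + 1) i) := by
  have key : ∀ j : Fin n, ∏ i : Fin n, dm n (σ i) (Function.update ν j (ν j + 1) i)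
      = X (σ j) * ∏ i : Fin n, dm n (σ i) (ν i)
        + C (MvPolynomial.X (ν j)) * ∏ i : Fin n, dm n (σ i) (ν i) := by
    intro j
    have h1 : (fun i => dm n (σ i) (Function.update ν j (ν j + 1) i))
        = Function.update (fun i => dm n (σ i) (ν i)) j (dm n (σ j) (ν j + 1)) := by
      funext i
      by_cases h : i = j
      · subst h; simp
      · simp [Function.update_of_ne h]
    have h2 : ∏ i : Fin n, dm n (σ i) (Function.update ν j (ν j + 1) i)
        = dm n (σ j) (ν j + 1) * ∏ i ∈ Finset.univ \ {j}, dm n (σ i) (ν i) := by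
      rw [show (∏ i : Fin n, dm n (σ i) (Function.update ν j (ν j + 1) i))
          = ∏ i : Fin n, Function.update (fun i => dm n (σ i) (ν i)) j
              (dm n (σ j) (ν j + 1)) i from by rw [h1]]
      exact Finset.prod_update_of_mem (Finset.mem_univ j) _ _
    have h3 : (∏ i : Fin n, dm n (σ i) (ν i))
        = dm n (σ j) (ν j) * ∏ i ∈ Finset.univ \ {j}, dm n (σ i) (ν i) :=
      Finset.prod_eq_mul_prod_sdiff_singleton_of_mem (Finset.mem_univ j) _
    have h4 : dm n (σ j) (ν j + 1)
        = dm n (σ j) (ν j) * (X (σ j) + C (MvPolynomial.X (ν j))) := by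
      rw [dm, Finset.prod_range_succ]; rfl
    rw [h2, h3, h4]; ring
  rw [Finset.sum_congr rfl fun j _ => key j, Finset.sum_add_distrib,
    ← Finset.sum_mul, ← Finset.sum_mul]
  have h5 : ∑ j : Fin n, (X (σ j) : P n) = ∑ i : Fin n, X i :=
    Equiv.sum_comp σ _
  have h6 : ∑ j : Fin n, (C (MvPolynomial.X (ν j)) : P n)
      = C (∑ i : Fin n, (MvPolynomial.X (ν i) : R)) := (map_sum C _ _).symm
  rw [h5, h6]; ring

/-- the recursion
`(x₁ + … + xₙ) · a_ν = -(Σᵢ t_{νᵢ+1}) · a_ν + Σⱼ a_{ν + eⱼ}`.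
Recall tₖ is encoded as `MvPolynomial.X (k-1)`, so `t_{νᵢ+1}` is `MvPolynomial.X (ν i)`. -/
theorem stmt_6 (n : ℕ) (hn : 1 ≤ n) (ν : Fin n → ℕ) :
    (∑ i : Fin n, (X i : P n)) * aPoly n ν =
      - C (∑ i : Fin n, (MvPolynomial.X (ν i) : R)) * aPoly n ν
      + ∑ j : Fin n, aPoly n (Function.update ν j (ν j + 1)) := by
  unfold aPoly
  rw [Finset.sum_comm]
  rw [Finset.mul_sum, Finset.mul_sum, ← Finset.sum_add_distrib]
  refine Finset.sum_congr rfl fun σ _ => ?_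
  rw [mul_smul_comm, key_per_sigma n ν σ]
  simp [smul_add, Finset.smul_sum, mul_smul_comm, neg_mul, mul_left_comm]


end
end

section
/- Pieri rule for double Schur polynomials: let λ be a partition with at most n parts (λ_1 ≥ … ≥ λ_n ≥ 0). Then (x_1 + … + x_n) · s_λ = −(Σ_{i=1}^n t_{λ_i + n − i + 1}) · s_λ + Σ_{λ' ⋗ λ} s_{λ'}, where the sum runs over all partitions λ' with at most n parts obtained from λ by adding exactly one box (i.e. λ' ⊇ λ componentwise, λ' differs from λ in exactly one entry, and there by 1). -/
/- R = ℤ[t₁, t₂, …] with tₖ encoded as `MvPolynomial.X (k-1)`, i.e. 0-indexed;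
   P = R[x₁, …, xₙ] = MvPolynomial (Fin n) R. -/

open MvPolynomial

noncomputable section

lemma dm_succ (n : ℕ) (i : Fin n) (k : ℕ) :
    dm n i (k+1) = dm n i k * (X i + C (MvPolynomial.X k : R)) :=
  Finset.prod_range_succ _ _

lemma prod_update_eq (n : ℕ) (σ : Equiv.Perm (Fin n)) (ν : Fin n → ℕ) (j : Fin n) :
    ∏ i : Fin n, dm n (σ i) (Function.update ν j (ν j + 1) i)
      = (X (σ j) + C (MvPolynomial.X (ν j) : R)) * ∏ i : Fin n, dm n (σ i) (ν i) := by
  rw [← Finset.mul_prod_erase Finset.univ _ (Finset.mem_univ j),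
      ← Finset.mul_prod_erase Finset.univ (fun i => dm n (σ i) (ν i)) (Finset.mem_univ j)]
  have h1 : ∏ i ∈ Finset.univ.erase j, dm n (σ i) (Function.update ν j (ν j + 1) i)
      = ∏ i ∈ Finset.univ.erase j, dm n (σ i) (ν i) :=
    Finset.prod_congr rfl fun i hi => by
      rw [Function.update_of_ne (Finset.ne_of_mem_erase hi)]
  rw [h1, Function.update_self, dm_succ]
  ring

lemma key (n : ℕ) (ν : Fin n → ℕ) :
    (∑ i : Fin n, (X i : P n)) * aPoly n ν
        + C (∑ j : Fin n, (MvPolynomial.X (ν j) : R)) * aPoly n ν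
      = ∑ j : Fin n, aPoly n (Function.update ν j (ν j + 1)) := by
  rw [← add_mul]
  simp only [aPoly, zsmul_eq_mul, prod_update_eq]
  rw [Finset.mul_sum, Finset.sum_comm]
  refine Finset.sum_congr rfl fun σ _ => ?_
  have : ∑ j : Fin n, ((Equiv.Perm.sign σ : ℤ) : P n) *
      ((X (σ j) + C (MvPolynomial.X (ν j) : R)) * ∏ i : Fin n, dm n (σ i) (ν i))
      = ((Equiv.Perm.sign σ : ℤ) : P n) *
        ((∑ j : Fin n, (X (σ j) + C (MvPolynomial.X (ν j) : R))) * ∏ i : Fin n, dm n (σ i) (ν i)) := by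
    rw [Finset.sum_mul, Finset.mul_sum]
  rw [this, Finset.sum_add_distrib, Equiv.sum_comp σ (fun i => (X i : P n)), ← map_sum]
  ring

lemma aPoly_vanish (n : ℕ) (ν : Fin n → ℕ) (j k : Fin n) (hjk : j ≠ k) (h : ν j = ν k) :
    aPoly n ν = 0 := by
  have hswap : ∀ i, ν (Equiv.swap j k i) = ν i := by
    intro i
    rcases eq_or_ne i j with rfl | hij
    · rw [Equiv.swap_apply_left]; exact h.symm
    rcases eq_or_ne i k with rfl | hik
    · rw [Equiv.swap_apply_right]; exact h
    · rw [Equiv.swap_apply_of_ne_of_ne hij hik]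
  have hneg : ∀ σ : Equiv.Perm (Fin n),
      ((Equiv.Perm.sign (σ * Equiv.swap j k) : ℤ) • ∏ i : Fin n, dm n ((σ * Equiv.swap j k) i) (ν i))
        = - ((Equiv.Perm.sign σ : ℤ) • ∏ i : Fin n, dm n (σ i) (ν i)) := by
    intro σ
    have h1 : Equiv.Perm.sign (σ * Equiv.swap j k) = - Equiv.Perm.sign σ := by
      rw [Equiv.Perm.sign_mul, Equiv.Perm.sign_swap hjk, mul_neg_one]
    have h2 : ∏ i : Fin n, dm n ((σ * Equiv.swap j k) i) (ν i)
        = ∏ i : Fin n, dm n (σ i) (ν i) := by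
      calc ∏ i : Fin n, dm n ((σ * Equiv.swap j k) i) (ν i)
          = ∏ i : Fin n, dm n (σ (Equiv.swap j k i)) (ν (Equiv.swap j k i)) :=
            Finset.prod_congr rfl fun i _ => by rw [Equiv.Perm.mul_apply, hswap]
        _ = ∏ i : Fin n, dm n (σ i) (ν i) :=
            Equiv.prod_comp (Equiv.swap j k) (fun i => dm n (σ i) (ν i))
    rw [h1, h2]
    push_cast
    rw [neg_smul]
  have hS : aPoly n ν = - aPoly n ν := by
    conv_lhs => rw [aPoly,
      ← Equiv.sum_comp (Equiv.mulRight (Equiv.swap j k))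
        (fun σ : Equiv.Perm (Fin n) => (Equiv.Perm.sign σ : ℤ) • ∏ i : Fin n, dm n (σ i) (ν i))]
    simp only [Equiv.coe_mulRight, hneg]
    rw [Finset.sum_neg_distrib, aPoly]
  have h2 : (2 : P n) * aPoly n ν = 0 := by linear_combination hS
  rcases mul_eq_zero.mp h2 with h | h
  · exact absurd h two_ne_zero
  · exact h

lemma aPoly_rho_ne_zero (n : ℕ) : aPoly n (rho n) ≠ 0 := by
  set φ : P n →+* ℤ :=
    eval₂Hom (MvPolynomial.eval (fun _ => (0 : ℤ))) (fun i : Fin n => (i : ℤ)) with hφ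
  have hdm : ∀ (i : Fin n) (k : ℕ), φ (dm n i k) = (i : ℤ) ^ k := by
    intro i k
    rw [dm, map_prod]
    have : ∀ j ∈ Finset.range k, φ (X i + C (MvPolynomial.X j : R)) = (i : ℤ) := by
      intro j _
      simp [hφ]
    rw [Finset.prod_congr rfl this, Finset.prod_const, Finset.card_range]
  set M : Matrix (Fin n) (Fin n) ℤ := Matrix.of fun a b : Fin n => (a : ℤ) ^ rho n b with hM
  have hφa : φ (aPoly n (rho n)) = M.det := by
    rw [aPoly, map_sum, Matrix.det_apply]
    refine Finset.sum_congr rfl fun σ _ => ?_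
    rw [map_zsmul, map_prod]
    simp only [hdm]
    rw [Units.smul_def]
    rfl
  have hMdet : M.det ≠ 0 := by
    have hMeq : M = (Matrix.vandermonde fun i : Fin n => (i : ℤ)).submatrix id Fin.revPerm := by
      ext a b
      simp [hM, Matrix.vandermonde, rho, Fin.val_rev]
      congr 1
      omega
    have hv : (Matrix.vandermonde fun i : Fin n => (i : ℤ)).det ≠ 0 := by
      rw [Matrix.det_vandermonde]
      refine Finset.prod_ne_zero_iff.mpr fun i _ => Finset.prod_ne_zero_iff.mpr fun j hj => ?_
      have hij : i < j := Finset.mem_Ioi.mp hj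
      have : (i : ℤ) < (j : ℤ) := by exact_mod_cast (Fin.lt_iff_val_lt_val.mp hij)
      omega
    rw [hMeq, Matrix.det_permute']
    simp only [ne_eq, mul_eq_zero, not_or]
    exact ⟨by simp [Units.ne_zero _], hv⟩
  intro h
  rw [h, map_zero] at hφa
  exact hMdet hφa.symm

open scoped Classical in
/-- Pieri rule for double Schur polynomials: if `s` assigns to each
partition `λ` with at most `n` parts its double Schur polynomial (the unique
symmetric polynomial with `s_λ · a_ρ = a_{λ+ρ}`), then
`(x₁+…+xₙ) · s_λ = -(Σᵢ t_{λᵢ+n-i+1}) s_λ + Σ_{λ' ⋗ λ} s_{λ'}`,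
the last sum being over partitions obtained from `λ` by adding one box.
Recall tₖ is encoded as `MvPolynomial.X (k-1)`, so `t_{λᵢ+n-i+1}` (with `i`
running from `1` to `n`) is `MvPolynomial.X (λ i + (n - 1 - i))` for `i : Fin n`. -/
theorem stmt_7 (n : ℕ) (hn : 1 ≤ n)
    (s : (Fin n → ℕ) → P n)
    (hs : ∀ lam : Fin n → ℕ, Antitone lam →
      (s lam).IsSymmetric ∧
        s lam * aPoly n (rho n) = aPoly n (fun i => lam i + rho n i))
    (lam : Fin n → ℕ) (hlam : Antitone lam) :
    (∑ i : Fin n, (X i : P n)) * s lam =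
      - C (∑ i : Fin n, (MvPolynomial.X (lam i + rho n i) : R)) * s lam
      + ∑ j : Fin n,
          if Antitone (Function.update lam j (lam j + 1)) then
            s (Function.update lam j (lam j + 1))
          else 0 := by
  obtain ⟨-, hA⟩ := hs lam hlam
  have hterm : ∀ j : Fin n,
      (if Antitone (Function.update lam j (lam j + 1)) then
          s (Function.update lam j (lam j + 1)) else 0) * aPoly n (rho n)
        = aPoly n (Function.update (fun i => lam i + rho n i) j (lam j + rho n j + 1)) := by
    intro j
    by_cases hat : Antitone (Function.update lam j (lam j + 1))
    · rw [if_pos hat]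
      obtain ⟨-, hA'⟩ := hs _ hat
      rw [hA']
      congr 1
      funext i
      rcases eq_or_ne i j with rfl | hij
      · simp only [Function.update_self]
        omega
      · simp [Function.update_of_ne hij]
    · rw [if_neg hat, zero_mul]
      simp only [Antitone, not_forall, not_le] at hat
      obtain ⟨a, b, hab, hlt⟩ := hat
      have hbj : b = j := by
        by_contra hbj
        rw [Function.update_of_ne hbj] at hlt
        rcases eq_or_ne a j with rfl | haj
        · rw [Function.update_self] at hlt
          have := hlam hab
          omega
        · rw [Function.update_of_ne haj] at hlt
          have := hlam hab
          omega
      rw [hbj] at hab hlt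
      have haj : a ≠ j := by
        rintro rfl
        exact absurd hlt (lt_irrefl _)
      rw [Function.update_of_ne haj, Function.update_self] at hlt
      have hav : (a : ℕ) < (j : ℕ) := by
        have := Fin.le_def.mp hab
        have := Fin.val_ne_of_ne haj
        omega
      obtain ⟨i0, hi0⟩ : ∃ i0 : Fin n, (i0 : ℕ) = (j : ℕ) - 1 :=
        ⟨⟨(j : ℕ) - 1, by omega⟩, rfl⟩
      have hi0j : i0 ≠ j := Fin.ne_of_val_ne (by omega)
      have hlamaj : lam a = lam j := by
        have := hlam hab
        omega
      have hlami0 : lam i0 = lam j := by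
        have h1 : lam i0 ≤ lam a := hlam (Fin.le_def.mpr (by omega))
        have h2 : lam j ≤ lam i0 := hlam (Fin.le_def.mpr (by omega))
        omega
      refine (aPoly_vanish n _ i0 j hi0j ?_).symm
      rw [Function.update_of_ne hi0j, Function.update_self]
      simp only [rho]
      have := j.isLt
      omega
  apply mul_right_cancel₀ (aPoly_rho_ne_zero n)
  rw [mul_assoc, hA, add_mul, mul_assoc, hA]
  conv_rhs => rw [Finset.sum_mul]
  simp only [hterm]
  linear_combination key n (fun i => lam i + rho n i)

end
end

section
/- Fix an integer m ≥ n, let J_m ⊆ P be the ideal generated by the elements t_k for all k > m together with (x_i|t)^m for i = 1, …, n, and let I_m := { g ∈ P : g symmetric and g · a_ρ ∈ J_m }, where ρ = (n−1, …, 1, 0). Then I_m equals the R-span of the set consisting of all elements t_k · s_λ with k > m and λ a partition with at most n parts, together with all elements s_λ with λ a partition with at most n parts satisfying λ_1 > m − n. -/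
/-
The products `∏ᵢ (xᵢ|t)^{αᵢ}` are monic with leading exponent `α` for every monomial order, so
they form an `R`-basis of `P`. Membership in `J_m` forces the coordinates at exponents `α` with
all `αᵢ < m` into `T_m = (t_k : k > m)`, because the `R`-span of the `t_k (x|t)^α` and of the
`(x|t)^α` with some `αᵢ ≥ m` is an ideal containing the generators of `J_m`. An alternating
polynomial `h` equals `∑_ν c_ν a_ν`, summed over strictly decreasing `ν`, where `c_ν` is its
`ν`-th coordinate. For symmetric `g`, applying this to `h = g a_ρ` and cancelling `a_ρ` gives
`g = ∑_ν c_ν s_{ν-ρ}`: a term with `ν₁ ≥ m` is a multiple of some `s_λ` with `λ₁ > m - n`, and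
otherwise `c_ν ∈ T_m`. Conversely `a_{λ+ρ} ∈ J_m` as soon as `λ₁ + n - 1 ≥ m`, since every term
of the alternant has a factor `(x_i|t)^{λ₁+n-1}`.
-/

/- R = ℤ[t₁, t₂, …] with tₖ encoded as `MvPolynomial.X (k-1)`, i.e. 0-indexed;
   P = R[x₁, …, xₙ] = MvPolynomial (Fin n) R. -/

open MvPolynomial

noncomputable section

/-- The ideal `J_m ⊆ P` generated by the `t_k` for `k > m` (encoded 0-indexed: the
constants `MvPolynomial.X k` for `k ≥ m`) and the `(x_i|t)^m` for `i = 1, …, n`. -/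
def Jm (n m : ℕ) : Ideal (P n) :=
  Ideal.span ({p : P n | ∃ k : ℕ, m ≤ k ∧ p = C (MvPolynomial.X k : R)} ∪
    {p : P n | ∃ i : Fin n, p = dm n i m})

namespace MvPolynomial

variable {σ S : Type*} [CommSemiring S]

theorem mul_mem_span_of_X_mul_mem {s : Set (MvPolynomial σ S)}
    (hs : ∀ i, ∀ g ∈ s, X i * g ∈ Submodule.span S s) (p : MvPolynomial σ S) {x : MvPolynomial σ S}
    (hx : x ∈ Submodule.span S s) : p * x ∈ Submodule.span S s := by
  have hX : ∀ i, ∀ x ∈ Submodule.span S s, X i * x ∈ Submodule.span S s := fun i x hx => by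
    induction hx using Submodule.span_induction with
    | mem g hg => exact hs i g hg
    | zero => simp
    | add x y _ _ hx hy => rw [mul_add]; exact add_mem hx hy
    | smul c x _ hx => rw [mul_smul_comm]; exact Submodule.smul_mem _ c hx
  induction p using MvPolynomial.induction_on generalizing x with
  | C c => rw [← smul_eq_C_mul]; exact Submodule.smul_mem _ c hx
  | add p q hp hq => rw [add_mul]; exact add_mem (hp hx) (hq hx)
  | mul_X p i hp => rw [mul_assoc]; exact hp (hX i x hx)

end MvPolynomial

theorem MonomialOrder.linearIndependent_of_monic {σ S ι : Type*} [CommRing S]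
    (m : MonomialOrder σ) {f : ι → MvPolynomial σ S} (hmonic : ∀ i, m.Monic (f i))
    (hdeg : Function.Injective fun i => m.degree (f i)) : LinearIndependent S f := by
  classical
  rw [linearIndependent_iff']
  intro s g hg i hi
  by_contra hgi
  obtain ⟨i₀, hi₀, hmax⟩ := (s.filter (g · ≠ 0)).exists_max_image
    (fun j => m.toSyn (m.degree (f j))) ⟨i, Finset.mem_filter.mpr ⟨hi, hgi⟩⟩
  obtain ⟨hi₀s, hgi₀⟩ := Finset.mem_filter.mp hi₀
  have hcoeff := congrArg (coeff (m.degree (f i₀))) hg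
  rw [coeff_sum, coeff_zero, Finset.sum_eq_single_of_mem i₀ hi₀s, coeff_smul,
    (hmonic i₀).coeff_degree, smul_eq_mul, mul_one] at hcoeff
  · exact hgi₀ hcoeff
  · intro j hj hji
    by_cases hgj : g j = 0
    · simp [hgj]
    rw [coeff_smul, m.coeff_eq_zero_of_lt, smul_zero]
    exact (hmax j (Finset.mem_filter.mpr ⟨hj, hgj⟩)).lt_of_ne
      fun h => hji (hdeg (m.toSyn.injective h))

section Sorting

open Equiv

variable {n : ℕ} {β : Type*} [LinearOrder β]

theorem Function.Injective.exists_strictAnti_comp_perm {α : Fin n → β} (hα : Function.Injective α) :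
    ∃ ν : Fin n → β, StrictAnti ν ∧ ∃ τ : Perm (Fin n), α = ν ∘ τ := by
  have hsort : StrictMono (α ∘ Tuple.sort α) :=
    (Tuple.monotone_sort α).strictMono_of_injective (hα.comp (Tuple.sort α).injective)
  refine ⟨α ∘ Tuple.sort α ∘ Fin.revPerm, hsort.comp_strictAnti Fin.rev_strictAnti,
    (Tuple.sort α * Fin.revPerm)⁻¹, ?_⟩
  ext i
  simp

theorem StrictAnti.eq_of_comp_perm_eq {ν ν' : Fin n → β} (hν : StrictAnti ν)
    (hν' : StrictAnti ν') {τ τ' : Perm (Fin n)} (h : ν ∘ τ = ν' ∘ τ') : ν = ν' ∧ τ = τ' := by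
  have hrange : Set.range ν = Set.range ν' := by
    rw [← τ.surjective.range_comp, h, τ'.surjective.range_comp]
  obtain rfl := (hν.range_inj hν').mp hrange
  exact ⟨rfl, Equiv.ext fun i => hν.injective (congrFun h i)⟩

end Sorting

section Partition

variable {n : ℕ}

theorem StrictAnti.antitone_add_val {ν : Fin n → ℕ} (hν : StrictAnti ν) :
    Antitone fun i => ν i + (i : ℕ) := by
  cases n with
  | zero => exact fun i => i.elim0
  | succ n =>
    refine Fin.antitone_iff_succ_le.mpr fun i => ?_
    have := hν i.castSucc_lt_succ
    simp only [Fin.val_succ, Fin.val_castSucc]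
    omega

theorem rho_strictAnti : StrictAnti (rho n) := fun i j hij => by
  have : (i : ℕ) < j := hij
  simp only [rho]
  omega

theorem StrictAnti.rho_le {ν : Fin n → ℕ} (hν : StrictAnti ν) (i : Fin n) : rho n i ≤ ν i := by
  have hi := i.isLt
  have := hν.antitone_add_val
    (show i ≤ ⟨n - 1, by omega⟩ from Fin.le_def.mpr (Nat.le_sub_one_of_lt hi))
  simp only [rho] at *
  omega

theorem StrictAnti.antitone_sub_rho {ν : Fin n → ℕ} (hν : StrictAnti ν) :
    Antitone fun i => ν i - rho n i := fun i j hij => by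
  have := hν.antitone_add_val hij
  have := hν.rho_le i
  have := hν.rho_le j
  have : (i : ℕ) ≤ j := hij
  simp only [rho] at *
  omega

end Partition

namespace DoubleSchur

open Finset

section DoubleMonomial

variable {σ S : Type*} [CommRing S] (t : ℕ → S)

-- `t j` plays the role of `t_{j+1}`: with `t = MvPolynomial.X`, `doublePow`, `alternant` and
-- `truncationIdeal` below are `dm`, `aPoly` and `Jm` by definition.
def doublePow (i : σ) (k : ℕ) : MvPolynomial σ S :=
  ∏ j ∈ range k, (X i + C (t j))

theorem doublePow_succ (i : σ) (k : ℕ) :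
    doublePow t i (k + 1) = doublePow t i k * (X i + C (t k)) :=
  prod_range_succ _ _

theorem doublePow_dvd_doublePow (i : σ) {k l : ℕ} (h : k ≤ l) :
    doublePow t i k ∣ doublePow t i l :=
  prod_dvd_prod_of_subset _ _ _ (range_subset_range.mpr h)

theorem rename_doublePow {τ : Type*} (f : σ → τ) (i : σ) (k : ℕ) :
    rename f (doublePow t i k) = doublePow t (f i) k := by
  simp [doublePow, map_prod]

theorem monic_doublePow (m : MonomialOrder σ) (i : σ) (k : ℕ) : m.Monic (doublePow t i k) :=
  MonomialOrder.Monic.prod fun j _ => m.monic_X_add_C i (t j)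

variable [Fintype σ]

def doubleMonomial (α : σ → ℕ) : MvPolynomial σ S :=
  ∏ i, doublePow t i (α i)

theorem doubleMonomial_zero : doubleMonomial t (0 : σ → ℕ) = 1 := by
  simp [doubleMonomial, doublePow]

theorem doubleMonomial_pi_single [DecidableEq σ] (i : σ) (k : ℕ) :
    doubleMonomial t (Pi.single i k) = doublePow t i k := by
  rw [doubleMonomial, Fintype.prod_eq_single i fun j hj => by simp [hj, doublePow]]
  simp

theorem X_mul_doubleMonomial [DecidableEq σ] (j : σ) (α : σ → ℕ) :
    X j * doubleMonomial t α =
      doubleMonomial t (Function.update α j (α j + 1)) - t (α j) • doubleMonomial t α := by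
  have hsplit : ∀ β : σ → ℕ, doubleMonomial t β = doublePow t j (β j) *
      ∏ i ∈ univ \ {j}, doublePow t i (β i) := fun β =>
    (mul_prod_erase univ _ (mem_univ j)).symm.trans (by rw [sdiff_singleton_eq_erase])
  have hrest : ∏ i ∈ univ \ {j}, doublePow t i (Function.update α j (α j + 1) i) =
      ∏ i ∈ univ \ {j}, doublePow t i (α i) :=
    prod_congr rfl fun i hi => by rw [Function.update_of_ne (by simpa using hi)]
  rw [hsplit, hsplit (Function.update α j _), Function.update_self, doublePow_succ, hrest,
    smul_eq_C_mul]
  ring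

theorem rename_doubleMonomial (τ : Equiv.Perm σ) (α : σ → ℕ) :
    rename τ (doubleMonomial t α) = doubleMonomial t (α ∘ ⇑τ⁻¹) := by
  rw [doubleMonomial, map_prod, doubleMonomial]
  exact Fintype.prod_equiv τ _ _ fun i => by simp [rename_doublePow]

theorem monic_doubleMonomial (m : MonomialOrder σ) (α : σ → ℕ) :
    m.Monic (doubleMonomial t α) :=
  MonomialOrder.Monic.prod fun i _ => monic_doublePow t m i (α i)

theorem degree_doubleMonomial [Nontrivial S] (m : MonomialOrder σ) (α : σ → ℕ) :
    m.degree (doubleMonomial t α) = Finsupp.equivFunOnFinite.symm α := by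
  rw [doubleMonomial, m.degree_prod_of_regular, Finsupp.equivFunOnFinite_symm_eq_sum]
  · refine sum_congr rfl fun i _ => ?_
    rw [doublePow, m.degree_prod_of_regular]
    · simp [m.degree_X_add_C]
    · intro j _; rw [(m.monic_X_add_C i (t j)).leadingCoeff_eq_one]; exact isRegular_one
  · intro i _
    rw [(monic_doublePow t m i (α i)).leadingCoeff_eq_one]
    exact isRegular_one

theorem linearIndependent_doubleMonomial :
    LinearIndependent S (doubleMonomial t : (σ → ℕ) → MvPolynomial σ S) := by
  nontriviality S
  -- any monomial order does; `lex` needs a linear order on `σ`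
  let : LinearOrder σ := LinearOrder.lift' _ (Fintype.equivFin σ).injective
  refine MonomialOrder.lex.linearIndependent_of_monic (monic_doubleMonomial t _) fun α β h => ?_
  simpa [degree_doubleMonomial] using h

theorem span_doubleMonomial :
    Submodule.span S (Set.range (doubleMonomial t : (σ → ℕ) → MvPolynomial σ S)) = ⊤ := by
  classical
  refine Submodule.eq_top_iff'.mpr fun p => ?_
  have hX : ∀ j, ∀ g ∈ Set.range (doubleMonomial t : (σ → ℕ) → MvPolynomial σ S),
      X j * g ∈ Submodule.span S (Set.range (doubleMonomial t)) := by
    rintro j _ ⟨α, rfl⟩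
    rw [X_mul_doubleMonomial]
    exact sub_mem (Submodule.subset_span ⟨_, rfl⟩)
      (Submodule.smul_mem _ _ (Submodule.subset_span ⟨α, rfl⟩))
  simpa using mul_mem_span_of_X_mul_mem hX p (Submodule.subset_span ⟨0, doubleMonomial_zero t⟩)

def doubleBasis : Module.Basis (σ → ℕ) S (MvPolynomial σ S) :=
  .mk (linearIndependent_doubleMonomial t) (span_doubleMonomial t).ge

@[simp]
theorem doubleBasis_apply (α : σ → ℕ) : doubleBasis t α = doubleMonomial t α :=
  Module.Basis.mk_apply _ _ _

theorem doubleBasis_repr_doubleMonomial (α : σ → ℕ) :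
    (doubleBasis t).repr (doubleMonomial t α) = Finsupp.single α 1 := by
  rw [← doubleBasis_apply, Module.Basis.repr_self]

end DoubleMonomial

section Truncation

variable {σ S : Type*} [CommRing S] (t : ℕ → S) (m : ℕ)

def tailIdeal : Ideal S :=
  Ideal.span {r | ∃ k, m ≤ k ∧ r = t k}

def truncationIdeal : Ideal (MvPolynomial σ S) :=
  Ideal.span ({p | ∃ k : ℕ, m ≤ k ∧ p = C (t k)} ∪ {p | ∃ i : σ, p = doublePow t i m})

theorem doublePow_mem_truncationIdeal (i : σ) {k : ℕ} (h : m ≤ k) :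
    doublePow t i k ∈ truncationIdeal t m :=
  Ideal.mem_of_dvd _ (doublePow_dvd_doublePow t i h) (Ideal.subset_span (Or.inr ⟨i, rfl⟩))

variable [Fintype σ]

def truncationGenerators : Set (MvPolynomial σ S) :=
  {p | ∃ k, m ≤ k ∧ ∃ α : σ → ℕ, p = t k • doubleMonomial t α} ∪
    {p | ∃ α : σ → ℕ, (∃ i, m ≤ α i) ∧ p = doubleMonomial t α}

theorem X_mul_mem_span_truncationGenerators (j : σ) {p : MvPolynomial σ S}
    (hp : p ∈ truncationGenerators t m) :
    X j * p ∈ Submodule.span S (truncationGenerators t m) := by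
  classical
  rcases hp with ⟨k, hk, α, rfl⟩ | ⟨α, ⟨i, hi⟩, rfl⟩
  · rw [mul_smul_comm, X_mul_doubleMonomial, smul_sub, smul_comm]
    exact sub_mem (Submodule.subset_span (Or.inl ⟨k, hk, _, rfl⟩))
      (Submodule.smul_mem _ _ (Submodule.subset_span (Or.inl ⟨k, hk, α, rfl⟩)))
  · have hi' : m ≤ Function.update α j (α j + 1) i := by
      rcases eq_or_ne i j with rfl | hij
      · simp only [Function.update_self]; omega
      · rwa [Function.update_of_ne hij]
    rw [X_mul_doubleMonomial]
    exact sub_mem (Submodule.subset_span (Or.inr ⟨_, ⟨i, hi'⟩, rfl⟩))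
      (Submodule.smul_mem _ _ (Submodule.subset_span (Or.inr ⟨α, ⟨i, hi⟩, rfl⟩)))

theorem mem_span_truncationGenerators_of_mem_truncationIdeal {p : MvPolynomial σ S}
    (hp : p ∈ truncationIdeal t m) : p ∈ Submodule.span S (truncationGenerators t m) := by
  classical
  induction hp using Submodule.span_induction with
  | mem p hp =>
    rcases hp with ⟨k, hk, rfl⟩ | ⟨i, rfl⟩
    · rw [← mul_one (C (t k)), ← smul_eq_C_mul, ← doubleMonomial_zero t]
      exact Submodule.subset_span (Or.inl ⟨k, hk, 0, rfl⟩)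
    · rw [← doubleMonomial_pi_single]
      exact Submodule.subset_span (Or.inr ⟨_, ⟨i, by simp⟩, rfl⟩)
  | zero => exact zero_mem _
  | add x y _ _ hx hy => exact add_mem hx hy
  | smul q x _ hx => exact mul_mem_span_of_X_mul_mem (X_mul_mem_span_truncationGenerators t m) q hx

theorem repr_mem_tailIdeal_of_mem_span_truncationGenerators {p : MvPolynomial σ S}
    (hp : p ∈ Submodule.span S (truncationGenerators t m)) {α : σ → ℕ} (hα : ∀ i, α i < m) :
    (doubleBasis t).repr p α ∈ tailIdeal t m := by
  induction hp using Submodule.span_induction with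
  | mem p hp =>
    rcases hp with ⟨k, hk, β, rfl⟩ | ⟨β, ⟨i, hi⟩, rfl⟩
    · rw [map_smul, doubleBasis_repr_doubleMonomial, Finsupp.smul_apply, smul_eq_mul]
      exact Ideal.mul_mem_right _ _ (Ideal.subset_span ⟨k, hk, rfl⟩)
    · have hβα : β ≠ α := fun h => (hα i).not_ge (h ▸ hi)
      simp [doubleBasis_repr_doubleMonomial, hβα]
  | zero => simp
  | add x y _ _ hx hy => simpa using add_mem hx hy
  | smul c x _ hx => simpa using Ideal.mul_mem_left _ c hx

theorem repr_mem_tailIdeal_of_mem_truncationIdeal {p : MvPolynomial σ S}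
    (hp : p ∈ truncationIdeal t m) {α : σ → ℕ} (hα : ∀ i, α i < m) :
    (doubleBasis t).repr p α ∈ tailIdeal t m :=
  repr_mem_tailIdeal_of_mem_span_truncationGenerators t m
    (mem_span_truncationGenerators_of_mem_truncationIdeal t m hp) hα

end Truncation

section Alternant

open Equiv

variable {σ S : Type*} [CommRing S] (t : ℕ → S) [Fintype σ]

theorem repr_rename (τ : Perm σ) (p : MvPolynomial σ S) (α : σ → ℕ) :
    (doubleBasis t).repr (rename τ p) α = (doubleBasis t).repr p (α ∘ τ) := by
  have key : Finsupp.lapply α ∘ₗ (doubleBasis t).repr.toLinearMap ∘ₗ (rename τ).toLinearMap =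
      Finsupp.lapply (α ∘ τ) ∘ₗ (doubleBasis t).repr.toLinearMap := by
    refine (doubleBasis t).ext fun β => ?_
    have hβ : β ∘ τ.symm = α ↔ β = α ∘ τ := by
      constructor <;> rintro rfl <;> ext <;> simp
    simp [rename_doubleMonomial, doubleBasis_repr_doubleMonomial, Finsupp.single_apply, hβ]
  exact LinearMap.congr_fun key p

variable [DecidableEq σ]

def IsAlternating (p : MvPolynomial σ S) : Prop :=
  ∀ τ : Perm σ, rename τ p = Perm.sign τ • p

def alternant (ν : σ → ℕ) : MvPolynomial σ S :=
  ∑ τ : Perm σ, Perm.sign τ • ∏ i, doublePow t (τ i) (ν i)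

theorem alternant_eq_sum (ν : σ → ℕ) :
    alternant t ν = ∑ τ : Perm σ, Perm.sign τ • doubleMonomial t (ν ∘ τ) := by
  refine Fintype.sum_equiv (Equiv.inv (Perm σ)) _ _ fun τ => ?_
  rw [Equiv.inv_apply, Perm.sign_inv, doubleMonomial]
  congr 1
  exact Fintype.prod_equiv τ _ _ fun i => by simp

theorem isAlternating_alternant (ν : σ → ℕ) : IsAlternating (alternant t ν) := by
  intro τ
  rw [alternant, map_sum, Finset.smul_sum]
  refine Fintype.sum_equiv (Equiv.mulLeft τ) _ _ fun π => ?_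
  rw [map_zsmul_unit, map_prod, Equiv.coe_mulLeft, Perm.sign_mul, smul_smul, ← mul_assoc,
    Int.units_mul_self, one_mul]
  simp [rename_doublePow]

theorem alternant_mem_truncationIdeal {m : ℕ} {ν : σ → ℕ} {i : σ} (h : m ≤ ν i) :
    alternant t ν ∈ truncationIdeal t m :=
  Ideal.sum_mem _ fun τ _ => Submodule.smul_of_tower_mem _ _ <| Ideal.mem_of_dvd _
    (dvd_prod_of_mem _ (mem_univ i)) (doublePow_mem_truncationIdeal t m (τ i) h)

theorem IsAlternating.mul_left_of_isSymmetric {g p : MvPolynomial σ S} (hp : IsAlternating p)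
    (hg : g.IsSymmetric) : IsAlternating (g * p) := fun τ => by
  rw [map_mul, hg τ, hp τ, mul_smul_comm]

theorem IsAlternating.repr_comp_perm {p : MvPolynomial σ S} (hp : IsAlternating p)
    (τ : Perm σ) (α : σ → ℕ) :
    (doubleBasis t).repr p (α ∘ τ) = Perm.sign τ • (doubleBasis t).repr p α := by
  rw [← repr_rename, hp τ, map_zsmul_unit, Finsupp.smul_apply]

theorem IsAlternating.repr_eq_zero [IsAddTorsionFree S] {p : MvPolynomial σ S}
    (hp : IsAlternating p) {α : σ → ℕ} (hα : ¬ Function.Injective α) :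
    (doubleBasis t).repr p α = 0 := by
  obtain ⟨i, j, hij, hne⟩ := Function.not_injective_iff.mp hα
  have hswap : α ∘ Equiv.swap i j = α := by
    ext k
    rcases eq_or_ne k i with rfl | hki
    · simp [hij]
    rcases eq_or_ne k j with rfl | hkj
    · simp [hij]
    · simp [Equiv.swap_apply_of_ne_of_ne hki hkj]
  have := hp.repr_comp_perm t (Equiv.swap i j) α
  rwa [hswap, Perm.sign_swap hne, Units.neg_smul, one_smul, self_eq_neg] at this

end Alternant

section Decomposition

open Equiv

variable {n : ℕ} {S : Type*} [CommRing S] (t : ℕ → S)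

theorem repr_alternant_self {ν : Fin n → ℕ} (hν : Function.Injective ν) :
    (doubleBasis t).repr (alternant t ν) ν = 1 := by
  rw [alternant_eq_sum, map_sum, Finsupp.finsetSum_apply, Finset.sum_eq_single 1]
  · simp [doubleBasis_repr_doubleMonomial]
  · intro τ _ hτ
    have hντ : ν ∘ τ ≠ ν := fun h => hτ (Equiv.ext fun i => hν (congrFun h i))
    simp [doubleBasis_repr_doubleMonomial, hντ]
  · simp

theorem alternant_ne_zero [Nontrivial S] {ν : Fin n → ℕ} (hν : Function.Injective ν) :
    alternant t ν ≠ 0 := fun h => by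
  simpa [h] using repr_alternant_self t hν

theorem IsAlternating.eq_sum_alternant [IsAddTorsionFree S] {p : MvPolynomial (Fin n) S}
    (hp : IsAlternating p) :
    p = ∑ ν ∈ ((doubleBasis t).repr p).support with StrictAnti ν,
      (doubleBasis t).repr p ν • alternant t ν := by
  set c := (doubleBasis t).repr p
  have hexpand : p = ∑ α ∈ c.support, c α • doubleMonomial t α := by
    conv_lhs => rw [← (doubleBasis t).linearCombination_repr p]
    simp [Finsupp.linearCombination_apply, Finsupp.sum, c]
  have hsign : ∀ (α : Fin n → ℕ) (τ : Perm (Fin n)), c (α ∘ τ) ≠ 0 ↔ c α ≠ 0 := fun α τ => by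
    rw [hp.repr_comp_perm, Ne, smul_eq_zero_iff_eq]
  conv_lhs => rw [hexpand]
  simp_rw [alternant_eq_sum, Finset.smul_sum, ← Finset.sum_product']
  symm
  -- `(ν, τ) ↦ ν ∘ τ` is a bijection onto the injective exponents, which contain the support
  refine Finset.sum_bij (fun x _ => x.1 ∘ x.2) ?_ ?_ ?_ ?_
  · rintro ⟨ν, τ⟩ hx
    simp only [Finset.mem_product, Finset.mem_filter, Finsupp.mem_support_iff] at hx ⊢
    exact (hsign ν τ).mpr hx.1.1
  · rintro ⟨ν, τ⟩ hx ⟨ν', τ'⟩ hx' h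
    simp only [Finset.mem_product, Finset.mem_filter] at hx hx'
    obtain ⟨rfl, rfl⟩ := StrictAnti.eq_of_comp_perm_eq hx.1.2 hx'.1.2 h
    rfl
  · intro α hα
    have hinj : Function.Injective α := by
      by_contra hni
      exact Finsupp.mem_support_iff.mp hα (hp.repr_eq_zero t hni)
    obtain ⟨ν, hν, τ, rfl⟩ := hinj.exists_strictAnti_comp_perm
    refine ⟨(ν, τ), ?_, rfl⟩
    simp only [Finset.mem_product, Finset.mem_filter, Finsupp.mem_support_iff] at hα ⊢
    exact ⟨⟨(hsign ν τ).mp hα, hν⟩, Finset.mem_univ _⟩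
  · rintro ⟨ν, τ⟩ _
    dsimp only
    rw [hp.repr_comp_perm t τ ν, smul_assoc]
    exact smul_comm _ _ _

end Decomposition

section Schur

variable {n : ℕ} {S : Type*} [CommRing S] (t : ℕ → S) (s : (Fin n → ℕ) → MvPolynomial (Fin n) S)

theorem eq_sum_smul_schur_of_isSymmetric [IsDomain S] [IsAddTorsionFree S]
    (hs : ∀ lam, Antitone lam →
      s lam * alternant t (rho n) = alternant t (fun i => lam i + rho n i))
    {g : MvPolynomial (Fin n) S} (hg : g.IsSymmetric) :
    g = ∑ ν ∈ ((doubleBasis t).repr (g * alternant t (rho n))).support with StrictAnti ν,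
      (doubleBasis t).repr (g * alternant t (rho n)) ν • s (fun i => ν i - rho n i) := by
  refine mul_right_cancel₀ (alternant_ne_zero t rho_strictAnti.injective) ?_
  conv_lhs =>
    rw [((isAlternating_alternant t _).mul_left_of_isSymmetric hg).eq_sum_alternant t]
  rw [Finset.sum_mul]
  refine Finset.sum_congr rfl fun ν hν => ?_
  have hν : StrictAnti ν := (Finset.mem_filter.mp hν).2
  rw [smul_mul_assoc, hs _ hν.antitone_sub_rho]
  congr
  ext i
  have := hν.rho_le i
  omega

def schurSpan (hn : 1 ≤ n) (m : ℕ) : Submodule S (MvPolynomial (Fin n) S) :=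
  Submodule.span S
    ({p | ∃ k : ℕ, m ≤ k ∧ ∃ lam : Fin n → ℕ, Antitone lam ∧ p = t k • s lam} ∪
      {p | ∃ lam : Fin n → ℕ, Antitone lam ∧ m - n < lam ⟨0, hn⟩ ∧ p = s lam})

theorem mem_schurSpan_of_isSymmetric [IsDomain S] [IsAddTorsionFree S]
    (hs : ∀ lam, Antitone lam →
      s lam * alternant t (rho n) = alternant t (fun i => lam i + rho n i))
    {m : ℕ} (hn : 1 ≤ n) (hm : n ≤ m) {g : MvPolynomial (Fin n) S} (hg : g.IsSymmetric)
    (hJ : g * alternant t (rho n) ∈ truncationIdeal t m) : g ∈ schurSpan t s hn m := by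
  rw [eq_sum_smul_schur_of_isSymmetric t s hs hg]
  refine Submodule.sum_mem _ fun ν hν => ?_
  have hν : StrictAnti ν := (Finset.mem_filter.mp hν).2
  by_cases hlarge : m ≤ ν ⟨0, hn⟩
  · refine Submodule.smul_mem _ _ (Submodule.subset_span (Or.inr ⟨_, hν.antitone_sub_rho, ?_, rfl⟩))
    have := hν.rho_le ⟨0, hn⟩
    simp only [rho] at *
    omega
  · have hsmall : ∀ i, ν i < m := fun i =>
      (hν.antitone (Fin.le_def.mpr (Nat.zero_le _))).trans_lt (not_le.mp hlarge)
    refine Submodule.span_mono ?_ (Submodule.smul_mem_span_smul_of_mem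
      (repr_mem_tailIdeal_of_mem_truncationIdeal t m hJ hsmall) (Set.mem_singleton _))
    rintro _ ⟨_, ⟨k, hk, rfl⟩, _, rfl, rfl⟩
    exact Or.inl ⟨k, hk, _, hν.antitone_sub_rho, rfl⟩

theorem isSymmetric_and_mul_mem_of_mem_schurSpan
    (hs : ∀ lam, Antitone lam → (s lam).IsSymmetric ∧
      s lam * alternant t (rho n) = alternant t (fun i => lam i + rho n i))
    {m : ℕ} (hn : 1 ≤ n) {g : MvPolynomial (Fin n) S} (hg : g ∈ schurSpan t s hn m) :
    g.IsSymmetric ∧ g * alternant t (rho n) ∈ truncationIdeal t m := by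
  induction hg using Submodule.span_induction with
  | mem p hp =>
    rcases hp with ⟨k, hk, lam, hlam, rfl⟩ | ⟨lam, hlam, hlam₀, rfl⟩
    · refine ⟨(hs lam hlam).1.smul _, ?_⟩
      rw [smul_mul_assoc, (hs lam hlam).2, smul_eq_C_mul]
      exact Ideal.mul_mem_right _ _ (Ideal.subset_span (Or.inl ⟨k, hk, rfl⟩))
    · refine ⟨(hs lam hlam).1, ?_⟩
      rw [(hs lam hlam).2]
      exact alternant_mem_truncationIdeal t (i := ⟨0, hn⟩) (by simp only [rho]; omega)
  | zero => simp
  | add x y _ _ hx hy => exact ⟨hx.1.add hy.1, by rw [add_mul]; exact add_mem hx.2 hy.2⟩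
  | smul c x _ hx =>
    exact ⟨hx.1.smul c, by rw [smul_mul_assoc]; exact Submodule.smul_of_tower_mem _ c hx.2⟩

end Schur

end DoubleSchur

/-- if `s` assigns to every partition `λ` with at most `n` parts its
double Schur polynomial (the unique symmetric polynomial with
`s_λ · a_ρ = a_{λ+ρ}`), then the ideal `I_m = {g symmetric | g · a_ρ ∈ J_m}` of
the ring of symmetric polynomials equals the `R`-span of the elements
`t_k • s_λ` (`k > m`, i.e. 0-indexed index `≥ m`, and `λ` a partition with at
most `n` parts) together with the `s_λ` for partitions `λ` with `λ₁ > m - n`. -/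
theorem stmt_9 (n m : ℕ) (hn : 1 ≤ n) (hm : n ≤ m)
    (s : (Fin n → ℕ) → P n)
    (hs : ∀ lam : Fin n → ℕ, Antitone lam →
      (s lam).IsSymmetric ∧
        s lam * aPoly n (rho n) = aPoly n (fun i => lam i + rho n i)) :
    {g : P n | g.IsSymmetric ∧ g * aPoly n (rho n) ∈ Jm n m} =
      (Submodule.span R
        ({p : P n | ∃ k : ℕ, m ≤ k ∧ ∃ lam : Fin n → ℕ, Antitone lam ∧
            p = (MvPolynomial.X k : R) • s lam} ∪
         {p : P n | ∃ lam : Fin n → ℕ, Antitone lam ∧ m - n < lam ⟨0, hn⟩ ∧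
            p = s lam}) : Set (P n)) := by
  ext g
  exact ⟨fun ⟨hg, hJ⟩ => DoubleSchur.mem_schurSpan_of_isSymmetric X s (fun lam h => (hs lam h).2)
      hn hm hg hJ,
    DoubleSchur.isSymmetric_and_mul_mem_of_mem_schurSpan X s hs hn⟩
end
end

section
/- For every k ≥ 0 one has the expansion (x_1 + … + x_n)^k · a_ρ = Σ_{|λ| = k} f_λ · a_{λ+ρ} + Σ_{|λ| < k} c_λ · a_{λ+ρ}, where both sums run over partitions λ with at most n parts, the coefficients c_λ are some elements of R, and for |λ| = k the coefficient f_λ ∈ ℕ is the number of chains of partitions ∅ = λ^(0) ⊂ λ^(1) ⊂ … ⊂ λ^(k) = λ in which each λ^(j+1) is obtained from λ^(j) by adding exactly one box (equivalently, the number of standard Young tableaux of shape λ). -/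
/-!
Multiplying an alternant by `x₁ + ⋯ + xₙ` obeys a Pieri rule: from
`x (x|t)^m = (x|t)^(m+1) - t_(m+1) (x|t)^m` one gets
`(∑ xᵢ) a_ν = ∑ᵢ a_(ν + eᵢ) - (∑ᵢ t_(νᵢ+1)) a_ν`, whose last term is an `R`-multiple of `a_ν`.
For a partition `λ`, either `λ + eᵢ` is again a partition or `λ + eᵢ + ρ` has two equal
entries, so that its alternant vanishes. Hence, modulo the span of the `a_(μ+ρ)` with `|μ| < k`,
`(∑ xᵢ)^k a_ρ` is the sum of `a_(λ+ρ)` over all chains of `k` box additions starting at `∅`;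
grouping the chains by their endpoint `λ` produces the coefficient `f_λ`.
-/

/- R = ℤ[t₁, t₂, …] with tₖ encoded as `MvPolynomial.X (k-1)`, i.e. 0-indexed;
   P = R[x₁, …, xₙ] = MvPolynomial (Fin n) R. -/

open MvPolynomial

noncomputable section

/-- `f_λ`: the number of chains of partitions `∅ = λ⁽⁰⁾ ⊂ λ⁽¹⁾ ⊂ … ⊂ λ⁽ᵏ⁾ = λ`
in which each `λ⁽ʲ⁺¹⁾` is obtained from `λ⁽ʲ⁾` by adding exactly one box
(equivalently, the number of standard Young tableaux of shape `λ`). -/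
def numChains (n k : ℕ) (lam : Fin n → ℕ) : ℕ :=
  Set.ncard {c : Fin (k + 1) → (Fin n → ℕ) |
    c 0 = 0 ∧ c (Fin.last k) = lam ∧ (∀ j, Antitone (c j)) ∧
    ∀ j : Fin k, ∃ i : Fin n,
      c j.succ = Function.update (c j.castSucc) i (c j.castSucc i + 1)}

lemma update_add_eq_add_single {ι M : Type*} [DecidableEq ι] [AddZeroClass M] (f : ι → M)
    (i : ι) (m : M) : Function.update f i (f i + m) = f + Pi.single i m := by
  ext j
  rcases eq_or_ne j i with rfl | hj <;> simp [*]

lemma sum_add_single_one {n : ℕ} (lam : Fin n → ℕ) (i : Fin n) :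
    ∑ j, (lam + Pi.single i 1 : Fin n → ℕ) j = ∑ j, lam j + 1 := by
  simp [Finset.sum_add_distrib]

lemma finite_setOf_sum_le (n k : ℕ) : {lam : Fin n → ℕ | ∑ i, lam i ≤ k}.Finite :=
  (Set.finite_Iic fun _ => k).subset fun _ hlam i =>
    (Finset.single_le_sum (fun _ _ => Nat.zero_le _) (Finset.mem_univ i)).trans hlam

lemma exists_finsum_eq_of_mem_span_image {ι S M : Type*} [Semiring S] [AddCommMonoid M]
    [Module S M] {v : ι → M} {s : Set ι} (hs : s.Finite) {x : M}
    (hx : x ∈ Submodule.span S (v '' s)) : ∃ c : ι → S, ∑ᶠ i ∈ s, c i • v i = x := by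
  rw [← hs.coe_toFinset, Submodule.mem_span_image_finset_iff_exists_fun'] at hx
  obtain ⟨c, hc⟩ := hx
  exact ⟨c, by rw [finsum_mem_eq_finite_toFinset_sum _ hs, hc]⟩

lemma X_mul_dm (n : ℕ) (i : Fin n) (k : ℕ) :
    X i * dm n i k = dm n i (k + 1) - C (X k : R) * dm n i k := by
  simp only [dm, Finset.prod_range_succ]
  ring

lemma aPoly_eq_det (n : ℕ) (ν : Fin n → ℕ) :
    aPoly n ν = (Matrix.of fun a i => dm n a (ν i)).det := by
  simp [aPoly, Matrix.det_apply, Units.smul_def]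

lemma aPoly_eq_zero_of_apply_eq (n : ℕ) (ν : Fin n → ℕ) {i j : Fin n} (hij : i ≠ j)
    (h : ν i = ν j) : aPoly n ν = 0 := by
  rw [aPoly_eq_det]
  exact Matrix.det_zero_of_column_eq hij fun a => by simp [h]

lemma X_mul_prod_dm (n : ℕ) (σ : Equiv.Perm (Fin n)) (ν : Fin n → ℕ) (i₀ : Fin n) :
    X (σ i₀) * ∏ i, dm n (σ i) (ν i) =
      ∏ i, dm n (σ i) ((ν + Pi.single i₀ 1 : Fin n → ℕ) i) -
        C (X (ν i₀) : R) * ∏ i, dm n (σ i) (ν i) := by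
  have hrest : ∏ i ∈ Finset.univ.erase i₀, dm n (σ i) ((ν + Pi.single i₀ 1 : Fin n → ℕ) i) =
      ∏ i ∈ Finset.univ.erase i₀, dm n (σ i) (ν i) :=
    Finset.prod_congr rfl fun i hi => by simp [Finset.ne_of_mem_erase hi]
  conv_rhs => rw [← Finset.mul_prod_erase _ _ (Finset.mem_univ i₀), hrest]
  rw [← Finset.mul_prod_erase _ _ (Finset.mem_univ i₀), ← mul_assoc, X_mul_dm]
  simp only [Pi.add_apply, Pi.single_eq_same]
  ring

lemma sum_X_mul_aPoly (n : ℕ) (ν : Fin n → ℕ) :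
    (∑ i, (X i : P n)) * aPoly n ν =
      ∑ i, aPoly n (ν + Pi.single i 1) - C (∑ i, (X (ν i) : R)) * aPoly n ν := by
  have hσ (σ : Equiv.Perm (Fin n)) : (∑ i, (X i : P n)) * ∏ i, dm n (σ i) (ν i) =
      ∑ i₀, ∏ i, dm n (σ i) ((ν + Pi.single i₀ 1 : Fin n → ℕ) i) -
        C (∑ i, (X (ν i) : R)) * ∏ i, dm n (σ i) (ν i) := by
    rw [← Equiv.sum_comp σ, Finset.sum_mul, map_sum, Finset.sum_mul, ← Finset.sum_sub_distrib]
    exact Finset.sum_congr rfl fun i₀ _ => X_mul_prod_dm n σ ν i₀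
  simp only [aPoly, Finset.mul_sum, mul_smul_comm, hσ, smul_sub, Finset.sum_sub_distrib,
    Finset.smul_sum]
  rw [Finset.sum_comm]

lemma exists_pred_eq_of_not_antitone_add_single {n : ℕ} {lam : Fin n → ℕ} (hlam : Antitone lam)
    {i : Fin n} (h : ¬Antitone (lam + Pi.single i 1)) :
    ∃ j : Fin n, (j : ℕ) + 1 = i ∧ lam j = lam i := by
  simp only [Antitone, not_forall, not_le] at h
  obtain ⟨a, b, hab, hlt⟩ := h
  have hbi : b = i := by
    by_contra hbi
    have := hlam hab
    simp only [Pi.add_apply, Pi.single_apply, if_neg hbi] at hlt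
    split_ifs at hlt <;> omega
  subst hbi
  have hab' : a < b := lt_of_le_of_ne hab (by rintro rfl; exact lt_irrefl _ hlt)
  have hle : lam a ≤ lam b := by simpa [hab'.ne] using hlt
  have hab_val : (a : ℕ) < b := hab'
  let j : Fin n := ⟨b - 1, by omega⟩
  have haj : a ≤ j := Fin.le_def.mpr (by simp only [j]; omega)
  have hjb : j ≤ b := Fin.le_def.mpr (by simp only [j]; omega)
  exact ⟨j, by simp only [j]; omega, le_antisymm ((hlam haj).trans hle) (hlam hjb)⟩

lemma aPoly_add_single_add_rho_eq_zero {n : ℕ} {lam : Fin n → ℕ} (hlam : Antitone lam)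
    {i : Fin n} (h : ¬Antitone (lam + Pi.single i 1)) :
    aPoly n (lam + Pi.single i 1 + rho n) = 0 := by
  obtain ⟨j, hji, hlamj⟩ := exists_pred_eq_of_not_antitone_add_single hlam h
  have hne : j ≠ i := fun hj => by rw [hj] at hji; omega
  refine aPoly_eq_zero_of_apply_eq n _ hne ?_
  simp only [Pi.add_apply, Pi.single_apply, if_neg hne, if_true, rho, hlamj]
  omega

def alternantSpan (n k : ℕ) : Submodule R (P n) :=
  Submodule.span R ((fun lam => aPoly n (lam + rho n)) '' {lam | Antitone lam ∧ ∑ i, lam i < k})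

section alternantSpan

variable {n k : ℕ} {lam : Fin n → ℕ}

lemma aPoly_add_rho_mem_alternantSpan (hlam : Antitone lam) (hk : ∑ i, lam i < k) :
    aPoly n (lam + rho n) ∈ alternantSpan n k :=
  Submodule.subset_span ⟨lam, ⟨hlam, hk⟩, rfl⟩

lemma aPoly_add_single_add_rho_mem_alternantSpan (hlam : Antitone lam)
    (hk : ∑ i, lam i + 1 < k) (i : Fin n) :
    aPoly n (lam + Pi.single i 1 + rho n) ∈ alternantSpan n k := by
  by_cases hi : Antitone (lam + Pi.single i 1)
  · exact aPoly_add_rho_mem_alternantSpan hi (by rwa [sum_add_single_one])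
  · rw [aPoly_add_single_add_rho_eq_zero hlam hi]
    exact zero_mem _

lemma sum_X_mul_aPoly_add_rho_sub_mem_alternantSpan (hlam : Antitone lam)
    (hk : ∑ i, lam i < k) :
    (∑ i, (X i : P n)) * aPoly n (lam + rho n) - ∑ i, aPoly n (lam + Pi.single i 1 + rho n) ∈
      alternantSpan n k := by
  rw [sum_X_mul_aPoly]
  simp only [add_right_comm lam, sub_sub_cancel_left, ← smul_eq_C_mul]
  exact neg_mem (Submodule.smul_mem _ _ (aPoly_add_rho_mem_alternantSpan hlam hk))

lemma sum_X_mul_mem_alternantSpan_succ {x : P n} (hx : x ∈ alternantSpan n k) :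
    (∑ i, (X i : P n)) * x ∈ alternantSpan n (k + 1) := by
  refine (Submodule.span_le (p := (alternantSpan n (k + 1)).comap
    (LinearMap.mulLeft R (∑ i, (X i : P n)))).mpr ?_ hx)
  rintro _ ⟨lam, ⟨hlam, hk⟩, rfl⟩
  have hstep := add_mem
    (sum_X_mul_aPoly_add_rho_sub_mem_alternantSpan hlam (hk.trans k.lt_succ_self))
    (sum_mem fun i (_ : i ∈ Finset.univ) =>
      aPoly_add_single_add_rho_mem_alternantSpan hlam (Nat.succ_lt_succ hk) i)
  rwa [sub_add_cancel] at hstep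

end alternantSpan

def IsBoxChain {n k : ℕ} (c : Fin (k + 1) → Fin n → ℕ) : Prop :=
  c 0 = 0 ∧ (∀ j, Antitone (c j)) ∧ ∀ j : Fin k, ∃ i, c j.succ = c j.castSucc + Pi.single i 1

namespace IsBoxChain

variable {n k : ℕ}

lemma sum_apply {c : Fin (k + 1) → Fin n → ℕ} (hc : IsBoxChain c) (j : Fin (k + 1)) :
    ∑ i, c j i = j := by
  induction j using Fin.induction with
  | zero => simp [hc.1]
  | succ j ih =>
    obtain ⟨i, hi⟩ := hc.2.2 j
    rw [hi, sum_add_single_one, ih, Fin.val_castSucc, Fin.val_succ]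

lemma init {d : Fin (k + 2) → Fin n → ℕ} (hd : IsBoxChain d) : IsBoxChain (Fin.init d) :=
  ⟨hd.1, fun j => hd.2.1 _, fun j => by
    simpa only [Fin.init, Fin.succ_castSucc] using hd.2.2 j.castSucc⟩

lemma exists_last_eq_add_single {d : Fin (k + 2) → Fin n → ℕ} (hd : IsBoxChain d) :
    ∃ i, d (Fin.last (k + 1)) = Fin.init d (Fin.last k) + Pi.single i 1 := by
  simpa [Fin.init] using hd.2.2 (Fin.last k)

lemma snoc {c : Fin (k + 1) → Fin n → ℕ} (hc : IsBoxChain c) {i : Fin n}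
    (hi : Antitone (c (Fin.last k) + Pi.single i 1)) :
    IsBoxChain (Fin.snoc c (c (Fin.last k) + Pi.single i 1) : Fin (k + 2) → Fin n → ℕ) := by
  refine ⟨by simpa using hc.1, fun j => ?_, fun j => ?_⟩
  · induction j using Fin.lastCases with
    | last => simpa using hi
    | cast j => simpa using hc.2.1 j
  · induction j using Fin.lastCases with
    | last => exact ⟨i, by simp⟩
    | cast j =>
      simp only [Fin.succ_castSucc, Fin.snoc_castSucc]
      exact hc.2.2 j

end IsBoxChain

lemma finite_setOf_isBoxChain (n k : ℕ) :
    {c : Fin (k + 1) → Fin n → ℕ | IsBoxChain c}.Finite :=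
  (Set.Finite.pi' fun _ => finite_setOf_sum_le n k).subset fun _ hc j =>
    (hc.sum_apply j).trans_le (Nat.lt_succ_iff.mp j.isLt)

def boxChains (n k : ℕ) : Finset (Fin (k + 1) → Fin n → ℕ) :=
  (finite_setOf_isBoxChain n k).toFinset

lemma mem_boxChains {n k : ℕ} {c : Fin (k + 1) → Fin n → ℕ} :
    c ∈ boxChains n k ↔ IsBoxChain c :=
  Set.Finite.mem_toFinset _

lemma boxChains_zero (n : ℕ) : boxChains n 0 = {0} := by
  ext c
  simp only [mem_boxChains, IsBoxChain, Finset.mem_singleton, IsEmpty.forall_iff, and_true]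
  refine ⟨fun h => funext fun j => by rw [Fin.fin_one_eq_zero j, h.1]; rfl, ?_⟩
  rintro rfl
  exact ⟨rfl, fun _ => antitone_const⟩

open scoped Finset in
lemma numChains_eq_card (n k : ℕ) (lam : Fin n → ℕ) :
    numChains n k lam = #{c ∈ boxChains n k | c (Fin.last k) = lam} := by
  rw [numChains, ← Set.ncard_coe_finset]
  congr 1
  ext c
  simp only [Finset.coe_filter, mem_boxChains, IsBoxChain, update_add_eq_add_single,
    Set.mem_ofPred_eq]
  tauto

lemma sum_boxChains_succ {M : Type*} [AddCommMonoid M] (n k : ℕ) (g : (Fin n → ℕ) → M)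
    (hg : ∀ lam, Antitone lam → ∀ i, ¬Antitone (lam + Pi.single i 1) →
      g (lam + Pi.single i 1) = 0) :
    ∑ d ∈ boxChains n (k + 1), g (d (Fin.last (k + 1))) =
      ∑ c ∈ boxChains n k, ∑ i, g (c (Fin.last k) + Pi.single i 1) := by
  rw [← Finset.sum_product']
  symm
  -- `Fin.snoc` appends the box `p.2` to the chain `p.1`; the pairs for which this leaves the
  -- partitions are exactly the terms killed by `hg`.
  refine Finset.sum_bij_ne_zero (fun p _ _ => Fin.snoc p.1 (p.1 (Fin.last k) + Pi.single p.2 1))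
    ?_ ?_ ?_ ?_
  · rintro ⟨c, i⟩ hp hne
    have hc := mem_boxChains.mp (Finset.mem_product.mp hp).1
    exact mem_boxChains.mpr (hc.snoc (by_contra fun h => hne (hg _ (hc.2.1 _) i h)))
  · rintro ⟨c, i⟩ - - ⟨c', i'⟩ - - h
    obtain rfl : c = c' := by simpa using congrArg Fin.init h
    have hi := congrFun (congrFun h (Fin.last (k + 1))) i
    simpa [Pi.single_apply] using hi
  · intro d hd hne
    have hd := mem_boxChains.mp hd
    obtain ⟨i, hi⟩ := hd.exists_last_eq_add_single
    refine ⟨(Fin.init d, i), Finset.mem_product.mpr ⟨mem_boxChains.mpr hd.init, Finset.mem_univ i⟩,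
      by simpa [← hi] using hne, ?_⟩
    simp only [← hi, Fin.snoc_init_self]
  · intro p _ _
    simp only [Fin.snoc_last]

lemma sum_boxChains_eq_finsum {M : Type*} [AddCommMonoid M] (n k : ℕ) (g : (Fin n → ℕ) → M) :
    ∑ c ∈ boxChains n k, g (c (Fin.last k)) =
      ∑ᶠ lam ∈ {lam : Fin n → ℕ | Antitone lam ∧ ∑ i, lam i = k}, numChains n k lam • g lam := by
  have hfin : {lam : Fin n → ℕ | Antitone lam ∧ ∑ i, lam i = k}.Finite :=
    (finite_setOf_sum_le n k).subset fun _ h => h.2.le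
  rw [finsum_mem_eq_finite_toFinset_sum _ hfin, ← Finset.sum_fiberwise_of_maps_to
    (t := hfin.toFinset) (g := fun c => c (Fin.last k))]
  · refine Finset.sum_congr rfl fun lam _ => ?_
    rw [numChains_eq_card, ← Finset.sum_const]
    exact Finset.sum_congr rfl fun c hc => by rw [(Finset.mem_filter.mp hc).2]
  · intro c hc
    have hc := mem_boxChains.mp hc
    simpa [hc.sum_apply] using hc.2.1 _

lemma sum_X_pow_mul_aPoly_rho_sub_mem_alternantSpan (n k : ℕ) :
    (∑ i, (X i : P n)) ^ k * aPoly n (rho n) -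
      ∑ c ∈ boxChains n k, aPoly n (c (Fin.last k) + rho n) ∈ alternantSpan n k := by
  induction k with
  | zero => simp [boxChains_zero]
  | succ k ih =>
    set A := ∑ i, (X i : P n)
    set S := ∑ c ∈ boxChains n k, aPoly n (c (Fin.last k) + rho n)
    set T := ∑ d ∈ boxChains n (k + 1), aPoly n (d (Fin.last (k + 1)) + rho n) with hT
    have hS : A * S - T ∈ alternantSpan n (k + 1) := by
      rw [hT, sum_boxChains_succ n k (fun lam => aPoly n (lam + rho n))
          fun _ hlam _ hi => aPoly_add_single_add_rho_eq_zero hlam hi,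
        Finset.mul_sum, ← Finset.sum_sub_distrib]
      refine sum_mem fun c hc => ?_
      have hc := mem_boxChains.mp hc
      exact sum_X_mul_aPoly_add_rho_sub_mem_alternantSpan (hc.2.1 _)
        (by simp [hc.sum_apply])
    have hsplit : A ^ (k + 1) * aPoly n (rho n) - T =
        A * (A ^ k * aPoly n (rho n) - S) + (A * S - T) := by
      ring
    rw [hsplit]
    exact add_mem (sum_X_mul_mem_alternantSpan_succ ih) hS

theorem stmt_10_general (n : ℕ) (k : ℕ) :
    ∃ c : (Fin n → ℕ) → R,
      (∑ i : Fin n, (X i : P n)) ^ k * aPoly n (rho n) =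
        (∑ᶠ lam ∈ {lam : Fin n → ℕ | Antitone lam ∧ ∑ i, lam i = k},
          (numChains n k lam : R) • aPoly n (fun i => lam i + rho n i)) +
        ∑ᶠ lam ∈ {lam : Fin n → ℕ | Antitone lam ∧ ∑ i, lam i < k},
          c lam • aPoly n (fun i => lam i + rho n i) := by
  obtain ⟨c, hc⟩ := exists_finsum_eq_of_mem_span_image
    ((finite_setOf_sum_le n k).subset fun _ h => h.2.le)
    (sum_X_pow_mul_aPoly_rho_sub_mem_alternantSpan n k)
  refine ⟨c, ?_⟩
  simp only [Nat.cast_smul_eq_nsmul, ← Pi.add_def]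
  rw [hc, ← sum_boxChains_eq_finsum n k fun lam => aPoly n (lam + rho n), add_sub_cancel]

/-- for every `k ≥ 0`,
`(x₁ + … + xₙ)ᵏ · a_ρ = Σ_{|λ| = k} f_λ a_{λ+ρ} + Σ_{|λ| < k} c_λ a_{λ+ρ}`,
where the sums run over partitions `λ` with at most `n` parts, `c_λ ∈ R`, and
for `|λ| = k` the coefficient is the number `f_λ` of chains of partitions from
`∅` to `λ` adding one box at each step. -/
theorem stmt_10 (n : ℕ) (hn : 1 ≤ n) (k : ℕ) :
    ∃ c : (Fin n → ℕ) → R,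
      (∑ i : Fin n, (X i : P n)) ^ k * aPoly n (rho n) =
        (∑ᶠ lam ∈ {lam : Fin n → ℕ | Antitone lam ∧ ∑ i, lam i = k},
          (numChains n k lam : R) • aPoly n (fun i => lam i + rho n i)) +
        ∑ᶠ lam ∈ {lam : Fin n → ℕ | Antitone lam ∧ ∑ i, lam i < k},
          c lam • aPoly n (fun i => lam i + rho n i) :=
  stmt_10_general n k
end
end

section
/- The map (R[x])^n → P sending (f_1, …, f_n) to Σ_{σ ∈ S_n} sgn(σ) f_{σ(1)}(x_1) f_{σ(2)}(x_2) ⋯ f_{σ(n)}(x_n) is an alternating R-multilinear map with values in the R-module of skew-symmetric polynomials, and the induced R-linear map from the n-th exterior power ⋀^n_R R[x] to the R-module of skew-symmetric polynomials in P is an isomorphism of R-modules. -/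
/- R = ℤ[t₁, t₂, …]; P = R[x₁, …, xₙ] = MvPolynomial (Fin n) R. -/

open MvPolynomial

noncomputable section

/-! The alternant `det (fᵢ(xⱼ))` is alternating in the `fᵢ`, and permuting the variables permutes
its columns, so it is skew-symmetric; the universal property of `⋀ⁿ` turns it into a linear map
`G`. Injectivity and surjectivity onto the skew-symmetric polynomials both come from the one-sided
inverse `H` sending `x^d` to `X^{d₁} ∧ ⋯ ∧ X^{dₙ}` when `d₁ < ⋯ < dₙ` and to `0` otherwise.
`H ∘ G = id` is checked on wedges of distinct monomials. Conversely, a skew-symmetric polynomial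
over a ring without 2-torsion has no monomial with a repeated exponent, so it is determined by its
coefficients at strictly increasing exponents; `G (H f)` and `f` share these, hence `G (H f) = f`.
-/

def AlternatingMap.restrictScalars (S : Type*) {T M N ι : Type*} [Semiring S] [Semiring T]
    [SMul S T] [AddCommMonoid M] [AddCommMonoid N] [Module S M] [Module T M] [Module S N]
    [Module T N] [IsScalarTower S T M] [IsScalarTower S T N] (f : M [⋀^ι]→ₗ[T] N) :
    M [⋀^ι]→ₗ[S] N where
  toMultilinearMap := f.toMultilinearMap.restrictScalars S
  map_eq_zero_of_eq' := f.map_eq_zero_of_eq'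

theorem Tuple.strictMono_comp_sort {α : Type*} [LinearOrder α] {n : ℕ} {k : Fin n → α}
    (hk : Function.Injective k) : StrictMono (k ∘ Tuple.sort k) :=
  (Tuple.monotone_sort k).strictMono_of_injective (hk.comp (Tuple.sort k).injective)

theorem Tuple.eq_sort_of_strictMono_comp {α : Type*} [LinearOrder α] {n : ℕ} {k : Fin n → α}
    {σ : Equiv.Perm (Fin n)} (hkσ : StrictMono (k ∘ σ)) : σ = Tuple.sort k :=
  Tuple.eq_sort_iff.mpr ⟨hkσ.monotone, fun _ _ hij heq => absurd (hkσ hij) heq.not_lt⟩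

section Alternant

variable (A : Type*) [CommRing A] (n : ℕ)

def alternant : Polynomial A [⋀^Fin n]→ₗ[A] MvPolynomial (Fin n) A :=
  (Matrix.detRowAlternating.restrictScalars A).compLinearMap
    (LinearMap.pi fun j => (Polynomial.aeval (X j : MvPolynomial (Fin n) A)).toLinearMap)

variable {A n}

theorem alternant_apply_eq_det (v : Fin n → Polynomial A) :
    alternant A n v =
      (Matrix.of fun i j => Polynomial.aeval (X j : MvPolynomial (Fin n) A) (v i)).det :=
  rfl

theorem alternant_apply (v : Fin n → Polynomial A) :
    alternant A n v = ∑ σ : Equiv.Perm (Fin n), (Equiv.Perm.sign σ : ℤ) •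
      ∏ i, Polynomial.aeval (X i : MvPolynomial (Fin n) A) (v (σ i)) := by
  simp [alternant_apply_eq_det, Matrix.det_apply, Units.smul_def]

theorem rename_alternant (τ : Equiv.Perm (Fin n)) (v : Fin n → Polynomial A) :
    rename τ (alternant A n v) = (Equiv.Perm.sign τ : ℤ) • alternant A n v := by
  have hcols : (Matrix.of fun i j => Polynomial.aeval (X j : MvPolynomial (Fin n) A) (v i)).map
      (rename τ) = (Matrix.of fun i j => Polynomial.aeval (X j) (v i)).submatrix id τ := by
    ext i j
    simp [← Polynomial.aeval_algHom_apply]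
  rw [alternant_apply_eq_det, AlgHom.map_det, AlgHom.mapMatrix_apply, hcols, Matrix.det_permute']
  simp [zsmul_eq_mul]

theorem alternant_X_pow (k : Fin n → ℕ) :
    alternant A n (fun i => Polynomial.X ^ k i) = ∑ σ : Equiv.Perm (Fin n),
      (Equiv.Perm.sign σ : ℤ) • monomial (Finsupp.equivFunOnFinite.symm (k ∘ σ)) 1 := by
  simp [alternant_apply, monomial_eq, Finsupp.prod_fintype]

theorem coeff_alternant_X_pow {d e : Fin n →₀ ℕ} (hd : StrictMono d) (he : StrictMono e) :
    coeff d (alternant A n fun i => Polynomial.X ^ e i) = if e = d then 1 else 0 := by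
  rw [alternant_X_pow, coeff_sum, Finset.sum_eq_single 1]
  · simp [Finsupp.ext_iff]
  · intro σ _ hσ
    rw [coeff_smul, coeff_monomial, if_neg, smul_zero]
    intro hdσ
    have hσ' : StrictMono (e ∘ σ) := by rwa [← Finsupp.coe_equivFunOnFinite_symm (⇑e ∘ ⇑σ), hdσ]
    exact hσ ((Tuple.eq_sort_of_strictMono_comp hσ').trans
      (Tuple.eq_sort_of_strictMono_comp (σ := 1) he).symm)
  · simp

variable (A n) in
def alternantLift : ⋀[A]^n (Polynomial A) →ₗ[A] MvPolynomial (Fin n) A :=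
  exteriorPower.alternatingMapLinearEquiv (alternant A n)

@[simp]
theorem alternantLift_ιMulti (v : Fin n → Polynomial A) :
    alternantLift A n (exteriorPower.ιMulti A n v) = alternant A n v :=
  exteriorPower.alternatingMapLinearEquiv_apply_ιMulti _ _

theorem rename_alternantLift (τ : Equiv.Perm (Fin n)) (x : ⋀[A]^n (Polynomial A)) :
    rename τ (alternantLift A n x) = (Equiv.Perm.sign τ : ℤ) • alternantLift A n x := by
  suffices (rename τ).toLinearMap ∘ₗ alternantLift A n =
      (Equiv.Perm.sign τ : ℤ) • alternantLift A n from LinearMap.congr_fun this x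
  ext v
  simp [rename_alternant]

variable (A n) in
def alternantLeftInverse : MvPolynomial (Fin n) A →ₗ[A] ⋀[A]^n (Polynomial A) :=
  (basisMonomials (Fin n) A).constr A fun d =>
    if StrictMono d then exteriorPower.ιMulti A n (fun i => Polynomial.X ^ d i) else 0

theorem alternantLeftInverse_monomial (d : Fin n →₀ ℕ) :
    alternantLeftInverse A n (monomial d 1) =
      if StrictMono d then exteriorPower.ιMulti A n (fun i => Polynomial.X ^ d i) else 0 :=
  (basisMonomials (Fin n) A).constr_basis A _ d

theorem alternantLeftInverse_comp_alternantLift :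
    alternantLeftInverse A n ∘ₗ alternantLift A n = LinearMap.id := by
  ext : 1
  refine Module.Basis.ext_alternating (Polynomial.basisMonomials A) fun k hk => ?_
  set τ := Tuple.sort k
  simp only [LinearMap.compAlternatingMap_apply, LinearMap.comp_apply, alternantLift_ιMulti,
    Polynomial.coe_basisMonomials, ← Polynomial.X_pow_eq_monomial, alternant_X_pow, map_sum,
    map_zsmul, LinearMap.id_apply, alternantLeftInverse_monomial]
  rw [Finset.sum_eq_single τ]
  · have hτ : StrictMono ⇑(Finsupp.equivFunOnFinite.symm (k ∘ τ)) := Tuple.strictMono_comp_sort hk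
    rw [if_pos hτ]
    have := (exteriorPower.ιMulti A n).map_perm (fun i => (Polynomial.X : Polynomial A) ^ k i) τ
    simp only [Finsupp.coe_equivFunOnFinite_symm, Function.comp_def] at this ⊢
    rw [this, Units.smul_def, smul_smul, Int.units_coe_mul_self, one_smul]
  · intro σ _ hστ
    rw [if_neg, smul_zero]
    exact fun hσ => hστ (Tuple.eq_sort_of_strictMono_comp hσ)
  · simp

theorem alternantLift_injective : Function.Injective (alternantLift A n) :=
  Function.LeftInverse.injective (g := alternantLeftInverse A n)
    (LinearMap.congr_fun alternantLeftInverse_comp_alternantLift)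

section Antisymmetric

variable {ι : Type*} [Fintype ι] [DecidableEq ι] {f : MvPolynomial ι A}

theorem coeff_comp_perm_of_rename_eq_sign_smul
    (hf : ∀ σ : Equiv.Perm ι, rename σ f = (Equiv.Perm.sign σ : ℤ) • f) (d : ι →₀ ℕ)
    (σ : Equiv.Perm ι) :
    coeff (Finsupp.equivFunOnFinite.symm (d ∘ σ)) f = (Equiv.Perm.sign σ : ℤ) • coeff d f := by
  have hd : Finsupp.mapDomain σ (Finsupp.equivFunOnFinite.symm (d ∘ σ)) = d := by
    ext i
    simp [Finsupp.mapDomain_equiv_apply]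
  rw [← coeff_rename_mapDomain σ σ.injective f, hd, hf σ, coeff_smul]

theorem coeff_eq_zero_of_rename_eq_sign_smul [IsAddTorsionFree A]
    (hf : ∀ σ : Equiv.Perm ι, rename σ f = (Equiv.Perm.sign σ : ℤ) • f) {d : ι →₀ ℕ}
    (hd : ¬ Function.Injective d) : coeff d f = 0 := by
  obtain ⟨i, j, hdij, hij⟩ := Function.not_injective_iff.mp hd
  have hswap : Finsupp.equivFunOnFinite.symm (d ∘ Equiv.swap i j) = d := by
    ext k
    rcases eq_or_ne k i with rfl | hki
    · simp [hdij]
    rcases eq_or_ne k j with rfl | hkj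
    · simp [hdij]
    · simp [Equiv.swap_apply_of_ne_of_ne hki hkj]
  have h := coeff_comp_perm_of_rename_eq_sign_smul hf d (Equiv.swap i j)
  rw [hswap, Equiv.Perm.sign_swap hij, Units.val_neg, Units.val_one, neg_one_smul,
    eq_neg_iff_add_eq_zero, ← two_nsmul] at h
  exact two_nsmul_eq_zero.mp h

end Antisymmetric

theorem eq_zero_of_rename_eq_sign_smul [IsAddTorsionFree A] {f : MvPolynomial (Fin n) A}
    (hf : ∀ σ : Equiv.Perm (Fin n), rename σ f = (Equiv.Perm.sign σ : ℤ) • f)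
    (h : ∀ d : Fin n →₀ ℕ, StrictMono d → coeff d f = 0) : f = 0 := by
  ext d
  by_cases hd : Function.Injective d
  · have hsorted := coeff_comp_perm_of_rename_eq_sign_smul hf d (Tuple.sort d)
    rwa [h _ (Tuple.strictMono_comp_sort hd), eq_comm, ← Units.smul_def,
      smul_eq_zero_iff_eq] at hsorted
  · exact coeff_eq_zero_of_rename_eq_sign_smul hf hd

theorem lcoeff_comp_alternantLift_comp_alternantLeftInverse {d : Fin n →₀ ℕ}
    (hd : StrictMono d) :
    lcoeff A d ∘ₗ alternantLift A n ∘ₗ alternantLeftInverse A n = lcoeff A d := by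
  refine (basisMonomials (Fin n) A).ext fun e => ?_
  rw [coe_basisMonomials]
  by_cases he : StrictMono e
  · simp [alternantLeftInverse_monomial, he, coeff_alternant_X_pow hd he, coeff_monomial]
  · have hde : e ≠ d := fun hed => he (hed ▸ hd)
    simp [alternantLeftInverse_monomial, he, coeff_monomial, hde]

theorem alternantLift_alternantLeftInverse [IsAddTorsionFree A] {f : MvPolynomial (Fin n) A}
    (hf : ∀ σ : Equiv.Perm (Fin n), rename σ f = (Equiv.Perm.sign σ : ℤ) • f) :
    alternantLift A n (alternantLeftInverse A n f) = f := by
  rw [← sub_eq_zero]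
  refine eq_zero_of_rename_eq_sign_smul (fun σ => ?_) fun d hd => ?_
  · rw [map_sub, hf, rename_alternantLift, smul_sub]
  · have := LinearMap.congr_fun (lcoeff_comp_alternantLift_comp_alternantLeftInverse hd) f
    simpa [sub_eq_zero] using this

end Alternant

theorem stmt_11_general (n : ℕ) :
    ∃ F : (Polynomial R) [⋀^Fin n]→ₗ[R] (P n),
      (∀ v : Fin n → Polynomial R,
        F v = ∑ σ : Equiv.Perm (Fin n), (Equiv.Perm.sign σ : ℤ) •
          ∏ i : Fin n, Polynomial.aeval (X i : P n) (v (σ i))) ∧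
      (∀ v : Fin n → Polynomial R, IsSkew n (F v)) ∧
      ∃ G : ⋀[R]^n (Polynomial R) →ₗ[R] P n,
        (∀ v : Fin n → Polynomial R,
          G ⟨ExteriorAlgebra.ιMulti R n v,
             ExteriorAlgebra.ιMulti_range R n ⟨v, rfl⟩⟩ = F v) ∧
        Function.Injective G ∧ LinearMap.range G = SkewSub n := by
  refine ⟨alternant R n, alternant_apply, fun v τ => rename_alternant τ v, alternantLift R n,
    alternantLift_ιMulti, alternantLift_injective, le_antisymm ?_ ?_⟩
  · rintro _ ⟨x, rfl⟩ τ
    exact rename_alternantLift τ x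
  · intro f hf
    exact ⟨alternantLeftInverse R n f, alternantLift_alternantLeftInverse hf⟩

/-- the map `(R[x])ⁿ → P` sending `(f₁, …, fₙ)` to
`Σ_{σ ∈ Sₙ} sgn(σ) f_{σ(1)}(x₁) ⋯ f_{σ(n)}(xₙ)` is an alternating `R`-multilinear
map taking values in the skew-symmetric polynomials, and the induced `R`-linear
map `⋀ⁿ_R R[x] → Λₙ^sgn` is an isomorphism of `R`-modules (injective with range
exactly the skew-symmetric polynomials). -/
theorem stmt_11 (n : ℕ) (hn : 1 ≤ n) :
    ∃ F : (Polynomial R) [⋀^Fin n]→ₗ[R] (P n),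
      (∀ v : Fin n → Polynomial R,
        F v = ∑ σ : Equiv.Perm (Fin n), (Equiv.Perm.sign σ : ℤ) •
          ∏ i : Fin n, Polynomial.aeval (X i : P n) (v (σ i))) ∧
      (∀ v : Fin n → Polynomial R, IsSkew n (F v)) ∧
      ∃ G : ⋀[R]^n (Polynomial R) →ₗ[R] P n,
        (∀ v : Fin n → Polynomial R,
          G ⟨ExteriorAlgebra.ιMulti R n v,
             ExteriorAlgebra.ιMulti_range R n ⟨v, rfl⟩⟩ = F v) ∧
        Function.Injective G ∧ LinearMap.range G = SkewSub n :=
  stmt_11_general n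

end
end
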